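/- arXiv:2201.11773 — 9 statements merged into one kernel-verified Lean document; each statement's English description precedes it below -/
import Mathlib

section
/- For any degree sequence d = (d_1, ..., d_n) of nonnegative integers with d_1 + ... + d_n = n - 1, the number of rooted trees on vertex set {1, ..., n} in which vertex i has exactly d_i children equals the multinomial coefficient (n-1)! / (d_1! · d_2! · ... · d_n!). -/
/-- A rooted labeled tree on `Fin n`: a root together with a parent function
such that the root is its own parent and every vertex reaches the root by
iterating the parent map. -/
structure LabRootedTree (n : ℕ) where
  root : Fin n
  par : Fin n → Fin n
  par_root : par root = root
  reaches : ∀ v, ∃ k : ℕ, par^[k] v = root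

/-- The degree (number of children) of vertex `i`. -/
def LabRootedTree.deg {n : ℕ} (t : LabRootedTree n) (i : Fin n) : ℕ :=
  (Finset.univ.filter (fun j => t.par j = i ∧ j ≠ t.root)).card


open Finset

set_option linter.unusedSectionVars false

structure RTree (V : Type) where
  root : V
  par : V → V
  par_root : par root = root
  reaches : ∀ v, ∃ k : ℕ, par^[k] v = root

namespace RTree

variable {V : Type} [Fintype V] [DecidableEq V]

theorem ext' {t s : RTree V} (h1 : t.root = s.root) (h2 : t.par = s.par) : t = s := by
  cases t; cases s; simp_all

instance : Finite (RTree V) :=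
  Finite.of_injective (fun t => (t.root, t.par)) (by
    intro a b h
    simp only [Prod.mk.injEq] at h
    exact ext' h.1 h.2)

def childSet (t : RTree V) (i : V) : Finset V :=
  Finset.univ.filter (fun j => t.par j = i ∧ j ≠ t.root)

def deg (t : RTree V) (i : V) : ℕ := (t.childSet i).card

theorem sum_deg (t : RTree V) : ∑ i, t.deg i = Fintype.card V - 1 := by
  have h := Finset.card_eq_sum_card_fiberwise
    (s := Finset.univ.filter (fun j => j ≠ t.root)) (t := Finset.univ) (f := t.par)
    (fun x _ => Finset.mem_univ _)
  have h2 : ∀ i, (Finset.univ.filter (fun j => j ≠ t.root)).filter (fun j => t.par j = i)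
      = t.childSet i := by
    intro i
    rw [Finset.filter_filter]
    simp only [childSet]
    congr 1
    ext j
    tauto
  simp only [h2] at h
  rw [Finset.filter_ne', Finset.card_erase_of_mem (Finset.mem_univ _), Finset.card_univ] at h
  rw [h]
  rfl

theorem exists_child (t : RTree V) (h : 1 < Fintype.card V) :
    ∃ c, t.par c = t.root ∧ c ≠ t.root := by
  obtain ⟨w, hw⟩ := Fintype.exists_ne_of_one_lt_card h t.root
  have hre : ∃ k, t.par^[k] w = t.root := t.reaches w
  classical
  let k0 := Nat.find hre
  have hk0 : t.par^[k0] w = t.root := Nat.find_spec hre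
  have hk0ne : k0 ≠ 0 := by
    intro h0
    rw [h0] at hk0
    exact hw hk0
  refine ⟨t.par^[k0 - 1] w, ?_, ?_⟩
  · rw [← Function.iterate_succ_apply' t.par (k0 - 1) w]
    rwa [Nat.succ_eq_add_one, Nat.sub_add_cancel (Nat.one_le_iff_ne_zero.mpr hk0ne)]
  · exact Nat.find_min hre (by omega)

theorem deg_root_pos (t : RTree V) (h : 1 < Fintype.card V) : 0 < t.deg t.root := by
  obtain ⟨c, hc1, hc2⟩ := t.exists_child h
  exact Finset.card_pos.mpr ⟨c, by simp [childSet, hc1, hc2]⟩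

theorem par_ne (t : RTree V) {v : V} (hd : t.deg v = 0) (hv : v ≠ t.root) :
    ∀ w, t.par w ≠ v := by
  intro w hw
  rcases eq_or_ne w t.root with rfl | hwr
  · exact hv (by rw [← t.par_root, hw])
  · have : w ∈ t.childSet v := by simp [childSet, hw, hwr]
    rw [deg, Finset.card_eq_zero] at hd
    simp [hd] at this

end RTree
namespace RTree

variable {V : Type} [Fintype V] [DecidableEq V]

def restrict {v : V} (t : RTree V) (hroot : t.root ≠ v) (hleaf : ∀ w, t.par w ≠ v) :
    RTree {x : V // x ≠ v} where
  root := ⟨t.root, hroot⟩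
  par := fun w => ⟨t.par w.1, hleaf w.1⟩
  par_root := Subtype.ext t.par_root
  reaches := by
    intro w
    obtain ⟨k, hk⟩ := t.reaches w.1
    refine ⟨k, Subtype.ext ?_⟩
    have : ∀ (k : ℕ) (w : {x : V // x ≠ v}),
        (((fun w => (⟨t.par w.1, hleaf w.1⟩ : {x : V // x ≠ v})))^[k] w).1 = t.par^[k] w.1 := by
      intro k
      induction k with
      | zero => intro w; rfl
      | succ k ih =>
        intro w
        rw [Function.iterate_succ_apply', Function.iterate_succ_apply']
        simp only [ih w]
    rw [this k w, hk]

theorem restrict_iter {v : V} (t : RTree V) (hroot : t.root ≠ v) (hleaf : ∀ w, t.par w ≠ v) :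
    ∀ (k : ℕ) (w : {x : V // x ≠ v}),
      (((restrict t hroot hleaf).par)^[k] w).1 = t.par^[k] w.1 := by
  intro k
  induction k with
  | zero => intro w; rfl
  | succ k ih =>
    intro w
    rw [Function.iterate_succ_apply', Function.iterate_succ_apply']
    show (t.par _) = _
    rw [ih w]

theorem restrict_childSet {v : V} (t : RTree V) (hroot : t.root ≠ v) (hleaf : ∀ w, t.par w ≠ v)
    (i : V) (hi : i ≠ v) :
    ((restrict t hroot hleaf).childSet ⟨i, hi⟩).image Subtype.val = (t.childSet i).erase v := by
  ext j
  simp only [Finset.mem_image, childSet, Finset.mem_filter, Finset.mem_univ, true_and,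
    Finset.mem_erase, restrict, Subtype.ext_iff, ne_eq]
  constructor
  · rintro ⟨a, ⟨h1, h2⟩, rfl⟩
    exact ⟨a.2, h1, h2⟩
  · rintro ⟨h1, h2, h3⟩
    exact ⟨⟨j, h1⟩, ⟨h2, h3⟩, rfl⟩

theorem restrict_deg {v : V} (t : RTree V) (hroot : t.root ≠ v) (hleaf : ∀ w, t.par w ≠ v)
    (i : V) (hi : i ≠ v) :
    (restrict t hroot hleaf).deg ⟨i, hi⟩ = t.deg i - (if t.par v = i then 1 else 0) := by
  have h1 : (restrict t hroot hleaf).deg ⟨i, hi⟩ = ((t.childSet i).erase v).card := by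
    rw [deg, ← restrict_childSet t hroot hleaf i hi,
      Finset.card_image_of_injective _ Subtype.val_injective]
  rw [h1]
  by_cases hp : t.par v = i
  · have hv : v ∈ t.childSet i := by simp [childSet, hp, Ne.symm hroot]
    rw [Finset.card_erase_of_mem hv, if_pos hp]; rfl
  · have hv : v ∉ t.childSet i := by simp [childSet, hp]
    rw [Finset.erase_eq_of_notMem hv, if_neg hp, Nat.sub_zero]; rfl

def extend (v : V) (u : {x : V // x ≠ v}) (t : RTree {x : V // x ≠ v}) : RTree V where
  root := t.root.1
  par := fun w => if hw : w = v then u.1 else (t.par ⟨w, hw⟩).1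
  par_root := by
    show (if hw : t.root.1 = v then u.1 else (t.par ⟨t.root.1, hw⟩).1) = t.root.1
    rw [dif_neg t.root.2]
    exact congrArg Subtype.val t.par_root
  reaches := by
    have iter : ∀ (k : ℕ) (w : {x : V // x ≠ v}),
        ((fun w => if hw : w = v then u.1 else (t.par ⟨w, hw⟩).1)^[k] w.1) = (t.par^[k] w).1 := by
      intro k
      induction k with
      | zero => intro w; rfl
      | succ k ih =>
        intro w
        rw [Function.iterate_succ_apply', Function.iterate_succ_apply']
        simp only [ih w]
        rw [dif_neg (t.par^[k] w).2]
    intro w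
    by_cases hw : w = v
    · obtain ⟨k, hk⟩ := t.reaches u
      refine ⟨k + 1, ?_⟩
      rw [Function.iterate_succ_apply]
      rw [dif_pos hw, iter k u, hk]
    · obtain ⟨k, hk⟩ := t.reaches ⟨w, hw⟩
      exact ⟨k, by rw [iter k ⟨w, hw⟩, hk]⟩

theorem extend_par_v {v : V} (u : {x : V // x ≠ v}) (t : RTree {x : V // x ≠ v}) :
    (extend v u t).par v = u.1 := dif_pos rfl

theorem extend_root_ne {v : V} (u : {x : V // x ≠ v}) (t : RTree {x : V // x ≠ v}) :
    (extend v u t).root ≠ v := t.root.2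

theorem extend_leaf {v : V} (u : {x : V // x ≠ v}) (t : RTree {x : V // x ≠ v}) :
    ∀ w, (extend v u t).par w ≠ v := by
  intro w
  show (if hw : w = v then u.1 else (t.par ⟨w, hw⟩).1) ≠ v
  by_cases hw : w = v
  · rw [dif_pos hw]; exact u.2
  · rw [dif_neg hw]; exact (t.par ⟨w, hw⟩).2

theorem restrict_extend {v : V} (u : {x : V // x ≠ v}) (t : RTree {x : V // x ≠ v}) :
    restrict (extend v u t) (extend_root_ne u t) (extend_leaf u t) = t := by
  apply ext'
  · rfl
  · funext w
    apply Subtype.ext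
    show (if hw : w.1 = v then u.1 else (t.par ⟨w.1, hw⟩).1) = (t.par w).1
    rw [dif_neg w.2]

theorem extend_restrict {v : V} (t : RTree V) (hroot : t.root ≠ v) (hleaf : ∀ w, t.par w ≠ v) :
    extend v ⟨t.par v, hleaf v⟩ (restrict t hroot hleaf) = t := by
  apply ext'
  · rfl
  · funext w
    show (if hw : w = v then t.par v else (t.par w)) = t.par w
    by_cases hw : w = v
    · rw [dif_pos hw, hw]
    · rw [dif_neg hw]

theorem extend_deg_v {v : V} (u : {x : V // x ≠ v}) (t : RTree {x : V // x ≠ v}) :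
    (extend v u t).deg v = 0 := by
  rw [deg, Finset.card_eq_zero]
  ext j
  simp only [childSet, Finset.mem_filter, Finset.mem_univ, true_and, Finset.notMem_empty,
    iff_false, not_and]
  intro hj
  exact absurd hj (extend_leaf u t j)

theorem extend_deg {v : V} (u : {x : V // x ≠ v}) (t : RTree {x : V // x ≠ v}) (i : V) (hi : i ≠ v) :
    (extend v u t).deg i = t.deg ⟨i, hi⟩ + (if u.1 = i then 1 else 0) := by
  have h := restrict_deg (extend v u t) (extend_root_ne u t) (extend_leaf u t) i hi
  rw [restrict_extend u t, extend_par_v u t] at h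
  by_cases hp : u.1 = i
  · have hv : v ∈ (extend v u t).childSet i := by
      simp [childSet, extend_par_v u t, hp, Ne.symm (extend_root_ne u t)]
    have hpos : 0 < (extend v u t).deg i := Finset.card_pos.mpr ⟨v, hv⟩
    rw [if_pos hp] at h ⊢
    omega
  · rw [if_neg hp] at h ⊢
    omega

end RTree
theorem nat_card_sigma {α : Type} [Fintype α] (β : α → Type) [∀ a, Finite (β a)] :
    Nat.card (Σ a, β a) = ∑ a, Nat.card (β a) := by
  haveI : ∀ a, Fintype (β a) := fun a => Fintype.ofFinite _
  simp only [Nat.card_eq_fintype_card]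
  exact Fintype.card_sigma

theorem RTree.count (m : ℕ) : ∀ (V : Type) [Fintype V] [DecidableEq V],
    Fintype.card V = m + 1 → ∀ d : V → ℕ, (∑ i, d i = m) →
    Nat.card {t : RTree V // ∀ i, t.deg i = d i} * ∏ i, Nat.factorial (d i) =
      Nat.factorial m := by
  induction m with
  | zero =>
    intro V _ _ hcard d hd
    obtain ⟨x, hx⟩ := Fintype.card_eq_one_iff.mp hcard
    have hd0 : ∀ i, d i = 0 := by
      intro i
      have h1 : d i ≤ ∑ j, d j :=
        Finset.single_le_sum (fun j _ => Nat.zero_le _) (Finset.mem_univ i)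
      omega
    have t0 : RTree V := ⟨x, fun _ => x, rfl, fun w => ⟨1, by simp⟩⟩
    have hne : Nonempty {t : RTree V // ∀ i, t.deg i = d i} := by
      refine ⟨⟨⟨x, fun _ => x, rfl, fun w => ⟨1, by simp⟩⟩, ?_⟩⟩
      intro i
      rw [hd0 i, RTree.deg, Finset.card_eq_zero]
      ext j
      simp only [RTree.childSet, Finset.mem_filter, Finset.mem_univ, true_and,
        Finset.notMem_empty, iff_false, not_and]
      intro _
      simp [hx j]
    haveI hsub : Subsingleton {t : RTree V // ∀ i, t.deg i = d i} := by
      constructor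
      rintro ⟨t, _⟩ ⟨s, _⟩
      apply Subtype.ext
      apply RTree.ext'
      · rw [hx t.root, hx s.root]
      · funext w; rw [hx (t.par w), hx (s.par w)]
    rw [Nat.card_eq_one_iff_unique.mpr ⟨hsub, hne⟩]
    simp [hd0]
  | succ m IH =>
    intro V _ _ hcard d hd
    classical
    have hvex : ∃ v, d v = 0 := by
      by_contra hc
      push_neg at hc
      have h1 : ∀ i ∈ (Finset.univ : Finset V), 1 ≤ d i :=
        fun i _ => Nat.one_le_iff_ne_zero.mpr (hc i)
      have h2 := Finset.sum_le_sum h1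
      rw [hd, Finset.sum_const, Finset.card_univ, hcard, smul_eq_mul, mul_one] at h2
      omega
    obtain ⟨v, hv⟩ := hvex
    have hcard' : Fintype.card {x : V // x ≠ v} = m + 1 := by
      rw [Fintype.card_subtype]
      rw [Finset.filter_ne', Finset.card_erase_of_mem (Finset.mem_univ v),
        Finset.card_univ, hcard]
      omega
    have hone : 1 < Fintype.card V := by omega
    have hroot : ∀ t : RTree V, (∀ i, t.deg i = d i) → t.root ≠ v := by
      intro t ht h
      have h1 := t.deg_root_pos hone
      rw [h, ht v, hv] at h1
      exact Nat.lt_irrefl 0 h1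
    have hleaf : ∀ t : RTree V, (∀ i, t.deg i = d i) → ∀ w, t.par w ≠ v := by
      intro t ht
      exact t.par_ne (by rw [ht v, hv]) (Ne.symm (hroot t ht))
    have hsub : ∑ i : {x : V // x ≠ v}, d i.1 = m + 1 := by
      rw [← Finset.sum_subtype (Finset.univ.erase v) (by simp) (fun i => d i)]
      have h3 := Finset.add_sum_erase Finset.univ d (Finset.mem_univ v)
      rw [hd] at h3
      omega
    have hprodsub : ∏ i, Nat.factorial (d i)
        = ∏ i : {x : V // x ≠ v}, Nat.factorial (d i.1) := by
      rw [← Finset.prod_subtype (Finset.univ.erase v) (by simp)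
        (fun i => Nat.factorial (d i))]
      rw [← Finset.mul_prod_erase Finset.univ
        (fun i => Nat.factorial (d i)) (Finset.mem_univ v)]
      simp [hv]
    let f : {t : RTree V // ∀ i, t.deg i = d i} → {x : V // x ≠ v} :=
      fun t => ⟨t.1.par v, hleaf t.1 t.2 v⟩
    have hS : Nat.card {t : RTree V // ∀ i, t.deg i = d i}
        = ∑ u : {x : V // x ≠ v},
            Nat.card {t : {t : RTree V // ∀ i, t.deg i = d i} // f t = u} := by
      rw [← nat_card_sigma]
      exact Nat.card_congr (Equiv.sigmaFiberEquiv f).symm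
    let d' : {x : V // x ≠ v} → {x : V // x ≠ v} → ℕ :=
      fun u i => d i.1 - if i = u then 1 else 0
    have key : ∀ u : {x : V // x ≠ v},
        Nat.card {t : {t : RTree V // ∀ i, t.deg i = d i} // f t = u}
          * ∏ i, Nat.factorial (d i) = Nat.factorial m * d u.1 := by
      intro u
      rcases Nat.eq_zero_or_pos (d u.1) with h0 | h0
      · haveI : IsEmpty {t : {t : RTree V // ∀ i, t.deg i = d i} // f t = u} := by
          refine ⟨fun x => ?_⟩
          obtain ⟨⟨t, ht⟩, hu⟩ := x
          have hu' : t.par v = u.1 := congrArg Subtype.val hu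
          have hvmem : v ∈ t.childSet u.1 := by
            simp [RTree.childSet, hu', Ne.symm (hroot t ht)]
          have h1 : 0 < t.deg u.1 := Finset.card_pos.mpr ⟨v, hvmem⟩
          rw [ht u.1, h0] at h1
          exact Nat.lt_irrefl 0 h1
        rw [Nat.card_of_isEmpty, h0]
        simp
      · have hd'sum : ∑ i, d' u i = m := by
          have hle : ∀ i ∈ (Finset.univ : Finset {x : V // x ≠ v}),
              (if i = u then 1 else 0) ≤ d i.1 := by
            intro i _
            by_cases h : i = u
            · rw [if_pos h, h]
              omega
            · simp [h]
          have h4 := Finset.sum_tsub_distrib Finset.univ hle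
          rw [show (∑ i, d' u i)
              = ∑ i : {x : V // x ≠ v}, (d i.1 - if i = u then 1 else 0) from rfl,
            h4, hsub, Fintype.sum_ite_eq' u (fun _ => 1)]
          omega
        have hcount' := IH {x : V // x ≠ v} hcard' (d' u) hd'sum
        have E : {t : {t : RTree V // ∀ i, t.deg i = d i} // f t = u}
            ≃ {t' : RTree {x : V // x ≠ v} // ∀ i, t'.deg i = d' u i} := by
          refine Equiv.mk
            (fun x => ⟨RTree.restrict x.1.1 (hroot x.1.1 x.1.2) (hleaf x.1.1 x.1.2), ?_⟩)
            (fun t' => ⟨⟨RTree.extend v u t'.1, ?_⟩, ?_⟩) ?_ ?_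
          · rintro ⟨i, hi⟩
            rw [RTree.restrict_deg]
            have hu' : x.1.1.par v = u.1 := congrArg Subtype.val x.2
            rw [x.1.2 i, hu']
            show d i - (if u.1 = i then 1 else 0) = d' u ⟨i, hi⟩
            by_cases hiu : i = u.1
            · rw [if_pos hiu.symm]
              show _ = d i - (if (⟨i, hi⟩ : {x : V // x ≠ v}) = u then 1 else 0)
              rw [if_pos (Subtype.ext hiu)]
            · rw [if_neg (fun h => hiu h.symm)]
              show _ = d i - (if (⟨i, hi⟩ : {x : V // x ≠ v}) = u then 1 else 0)
              rw [if_neg (fun h => hiu (congrArg Subtype.val h))]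
          · intro i
            by_cases hi : i = v
            · subst hi
              rw [RTree.extend_deg_v, hv]
            · rw [RTree.extend_deg u t'.1 i hi, t'.2 ⟨i, hi⟩]
              show (d i - (if (⟨i, hi⟩ : {x : V // x ≠ v}) = u then 1 else 0))
                  + (if u.1 = i then 1 else 0) = d i
              by_cases hiu : i = u.1
              · rw [if_pos (Subtype.ext hiu), if_pos hiu.symm]
                have h1 : 0 < d i := hiu ▸ h0
                omega
              · rw [if_neg (fun h => hiu (congrArg Subtype.val h)),
                  if_neg (fun h => hiu h.symm)]
                omega
          · apply Subtype.ext
            exact RTree.extend_par_v u t'.1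
          · rintro ⟨⟨t, ht⟩, hu⟩
            apply Subtype.ext
            apply Subtype.ext
            show RTree.extend v u _ = t
            have hu' : (⟨t.par v, hleaf t ht v⟩ : {x : V // x ≠ v}) = u := hu
            subst hu'
            exact RTree.extend_restrict t (hroot t ht) (hleaf t ht)
          · rintro ⟨t', ht'⟩
            apply Subtype.ext
            show RTree.restrict (RTree.extend v u t')
              (RTree.extend_root_ne u t') (RTree.extend_leaf u t') = t'
            exact RTree.restrict_extend u t'
        rw [Nat.card_congr E]
        have hpu : ∏ i, Nat.factorial (d i)
            = d u.1 * ∏ i : {x : V // x ≠ v}, Nat.factorial (d' u i) := by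
          have h10 : ∀ i ∈ Finset.univ.erase u,
              Nat.factorial (d' u i) = Nat.factorial (d i.1) := by
            intro i hi
            simp [d', (Finset.mem_erase.mp hi).1]
          have h11 : d' u u = d u.1 - 1 := by simp [d']
          obtain ⟨c, hc⟩ : ∃ c, d u.1 = c + 1 := ⟨d u.1 - 1, by omega⟩
          rw [hprodsub,
            ← Finset.mul_prod_erase Finset.univ
              (fun i : {x : V // x ≠ v} => Nat.factorial (d i.1)) (Finset.mem_univ u),
            ← Finset.mul_prod_erase Finset.univ
              (fun i : {x : V // x ≠ v} => Nat.factorial (d' u i)) (Finset.mem_univ u),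
            Finset.prod_congr rfl h10]
          simp only [h11, hc, Nat.add_sub_cancel, Nat.factorial_succ]
          ring
        rw [hpu, mul_comm (d u.1) _, ← mul_assoc, hcount']
    rw [hS, Finset.sum_mul]
    rw [Finset.sum_congr rfl (fun u _ => key u), ← Finset.mul_sum, hsub,
      Nat.factorial_succ]
    ring

def labEquiv (n : ℕ) (d : Fin n → ℕ) :
    {t : LabRootedTree n // ∀ i, t.deg i = d i} ≃ {t : RTree (Fin n) // ∀ i, t.deg i = d i} where
  toFun x := ⟨⟨x.1.root, x.1.par, x.1.par_root, x.1.reaches⟩, fun i => by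
    rw [← x.2 i]; rfl⟩
  invFun x := ⟨⟨x.1.root, x.1.par, x.1.par_root, x.1.reaches⟩, fun i => by
    rw [← x.2 i]; rfl⟩
  left_inv x := rfl
  right_inv x := rfl

/-- The number of rooted labeled trees on `[n]` in which vertex `i` has exactly
`d i` children equals `(n-1)! / ∏ i, (d i)!`. -/
theorem stmt0 (n : ℕ) (hn : 0 < n) (d : Fin n → ℕ) (hd : ∑ i, d i = n - 1) :
    Nat.card {t : LabRootedTree n // ∀ i, t.deg i = d i} =
      Nat.factorial (n - 1) / ∏ i, Nat.factorial (d i) := by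
  obtain ⟨m, rfl⟩ : ∃ m, n = m + 1 := ⟨n - 1, by omega⟩
  simp only [Nat.add_sub_cancel] at hd ⊢
  have hcount := RTree.count m (Fin (m + 1)) (by simp) d hd
  rw [Nat.card_congr (labEquiv (m + 1) d)]
  have hpos : 0 < ∏ i, Nat.factorial (d i) :=
    Finset.prod_pos (fun i _ => Nat.factorial_pos _)
  exact (Nat.div_eq_of_eq_mul_left hpos hcount.symm).symm
end

section
/- Eggs-in-one-basket lemma, part 1: Fix real numbers 0 < a_1 ≤ a_2 ≤ ... ≤ a_n and integers k, ℓ with n/2 ≤ k < ℓ ≤ n. Let A be a uniformly random element of the union of the set of k-element subsets of [n] and the set of (n-k)-element subsets of [n], and let A' be a uniformly random element of the union of the set of ℓ-element subsets of [n] and the set of (n-ℓ)-element subsets of [n]. Then max{a_i : i ∈ A'} is stochastically dominated by max{a_i : i ∈ A}, i.e., for every real x, P(max{a_i : i ∈ A'} ≤ x) ≥ P(max{a_i : i ∈ A} ≤ x). (Here max over the empty set is defined to be 0.) -/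
open scoped Classical

open Finset

/-- The maximum of `a` over a finite set, with the convention that the
maximum over the empty set is `0`. -/
noncomputable def setMax {n : ℕ} (a : Fin n → ℝ) (S : Finset (Fin n)) : ℝ :=
  if h : S.Nonempty then S.sup' h a else 0

lemma choose_step {m c : ℕ} (h : 2 * c < m) : m.choose c ≤ m.choose (c + 1) := by
  rcases Nat.lt_or_ge (2 * c + 1) m with h1 | h1
  · exact Nat.choose_le_succ_of_lt_half_left (by omega)
  · have hm : m = 2 * c + 1 := by omega
    subst hm
    have := Nat.choose_symm (n := 2 * c + 1) (k := c) (by omega)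
    have h2 : 2 * c + 1 - c = c + 1 := by omega
    rw [h2] at this
    omega

lemma choose_up_half {m a b : ℕ} (hab : a ≤ b) (h2 : 2 * b ≤ m) :
    m.choose a ≤ m.choose b := by
  induction b, hab using Nat.le_induction with
  | base => exact le_rfl
  | succ b hb ih =>
    exact (ih (by omega)).trans (choose_step (by omega))

lemma choose_up {m a b : ℕ} (hab : a ≤ b) (hm : a + b ≤ m) : m.choose a ≤ m.choose b := by
  rcases le_or_gt (2 * b) m with h | h
  · exact choose_up_half hab h
  · have hbm : b ≤ m := by omega
    rw [← Nat.choose_symm hbm]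
    exact choose_up_half (by omega) (by omega)

lemma choose_down {m s r : ℕ} (hsr : s ≤ r) (hm : m ≤ r + s) : m.choose r ≤ m.choose s := by
  rcases le_or_gt r m with h | h
  · rw [← Nat.choose_symm h]
    exact choose_up (by omega) (by omega)
  · simp [Nat.choose_eq_zero_of_lt h]

lemma succ_choose_int (m k : ℕ) :
    ((k : ℤ) + 1) * m.choose (k + 1) = ((m : ℤ) - k) * m.choose k := by
  rcases le_or_gt k m with h | h
  · have h0 := Nat.choose_succ_right_eq m k
    zify [h] at h0
    linarith
  · rw [Nat.choose_eq_zero_of_lt h, Nat.choose_eq_zero_of_lt (by omega)]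
    simp

/-- Key consecutive-step inequality. -/
lemma key_step (n m k : ℕ) (hm : m ≤ n) (hk : n ≤ 2 * k) (hk2 : k + 1 ≤ n) :
    (m.choose k + m.choose (n - k)) * n.choose (k + 1) ≤
    (m.choose (k + 1) + m.choose (n - k - 1)) * n.choose k := by
  obtain ⟨j, hj⟩ : ∃ j, n = k + j + 1 := ⟨n - k - 1, by omega⟩
  have hnk : n - k = j + 1 := by omega
  have hnk1 : n - k - 1 = j := by omega
  rw [hnk1, hnk]
  -- work in ℤ
  have h1 : ((k : ℤ) + 1) * n.choose (k + 1) = ((j : ℤ) + 1) * n.choose k := by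
    have h0 := succ_choose_int n k
    have hnj : ((n : ℤ) - k) = (j : ℤ) + 1 := by omega
    rw [h0, hnj]
  have h2 : ((k : ℤ) + 1) * m.choose (k + 1) = ((m : ℤ) - k) * m.choose k :=
    succ_choose_int m k
  have h3 : ((j : ℤ) + 1) * m.choose (j + 1) = ((m : ℤ) - j) * m.choose j :=
    succ_choose_int m j
  have h4 : ((n : ℤ) - m) * m.choose k ≤ ((n : ℤ) - m) * m.choose j := by
    rcases eq_or_lt_of_le hm with he | hlt
    · rw [he]; simp
    · have hAB : m.choose k ≤ m.choose j := choose_down (by omega) (by omega)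
      have hnm : (0 : ℤ) ≤ (n : ℤ) - m := by omega
      exact mul_le_mul_of_nonneg_left (by exact_mod_cast hAB) hnm
  have hKpos : (0 : ℤ) ≤ (n.choose k : ℤ) := by positivity
  have goal' : ((k : ℤ) + 1) * (((m.choose k : ℤ) + m.choose (j + 1)) * n.choose (k + 1)) ≤
      ((k : ℤ) + 1) * (((m.choose (k + 1) : ℤ) + m.choose j) * n.choose k) := by
    calc ((k : ℤ) + 1) * (((m.choose k : ℤ) + m.choose (j + 1)) * n.choose (k + 1))
        = ((m.choose k : ℤ) + m.choose (j + 1)) * (((k : ℤ) + 1) * n.choose (k + 1)) := by ring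
      _ = ((m.choose k : ℤ) + m.choose (j + 1)) * (((j : ℤ) + 1) * n.choose k) := by rw [h1]
      _ = (((j : ℤ) + 1) * m.choose k + ((j : ℤ) + 1) * m.choose (j + 1)) * n.choose k := by ring
      _ = (((j : ℤ) + 1) * m.choose k + ((m : ℤ) - j) * m.choose j) * n.choose k := by rw [h3]
      _ ≤ (((m : ℤ) - k) * m.choose k + ((k : ℤ) + 1) * m.choose j) * n.choose k := by
          apply mul_le_mul_of_nonneg_right _ hKpos
          have hn' : (n : ℤ) = (k : ℤ) + j + 1 := by omega
          nlinarith [h4]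
      _ = (((k : ℤ) + 1) * m.choose (k + 1) + ((k : ℤ) + 1) * m.choose j) * n.choose k := by
          rw [h2]
      _ = ((k : ℤ) + 1) * (((m.choose (k + 1) : ℤ) + m.choose j) * n.choose k) := by ring
  have hfin : ((m.choose k : ℤ) + m.choose (j + 1)) * n.choose (k + 1) ≤
      ((m.choose (k + 1) : ℤ) + m.choose j) * n.choose k :=
    le_of_mul_le_mul_left goal' (by positivity)
  exact_mod_cast hfin

/-- Chained inequality. -/
lemma key_chain (n m k ℓ : ℕ) (hm : m ≤ n) (hk : n ≤ 2 * k) (hkl : k ≤ ℓ) (hl : ℓ ≤ n) :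
    (m.choose k + m.choose (n - k)) * n.choose ℓ ≤
    (m.choose ℓ + m.choose (n - ℓ)) * n.choose k := by
  induction ℓ, hkl using Nat.le_induction with
  | base => exact le_rfl
  | succ ℓ hb ih =>
    have hln : ℓ ≤ n := by omega
    have ih' := ih hln
    have hstep := key_step n m ℓ hm (by omega) (by omega)
    have hDpos : 0 < n.choose ℓ := Nat.choose_pos hln
    have hc : (m.choose k + m.choose (n - k)) * n.choose (ℓ + 1) * n.choose ℓ ≤
        (m.choose (ℓ + 1) + m.choose (n - ℓ - 1)) * n.choose k * n.choose ℓ := by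
      calc (m.choose k + m.choose (n - k)) * n.choose (ℓ + 1) * n.choose ℓ
          = (m.choose k + m.choose (n - k)) * n.choose ℓ * n.choose (ℓ + 1) := by ring
        _ ≤ (m.choose ℓ + m.choose (n - ℓ)) * n.choose k * n.choose (ℓ + 1) :=
            Nat.mul_le_mul_right _ ih'
        _ = (m.choose ℓ + m.choose (n - ℓ)) * n.choose (ℓ + 1) * n.choose k := by ring
        _ ≤ (m.choose (ℓ + 1) + m.choose (n - ℓ - 1)) * n.choose ℓ * n.choose k :=
            Nat.mul_le_mul_right _ hstep
        _ = (m.choose (ℓ + 1) + m.choose (n - ℓ - 1)) * n.choose k * n.choose ℓ := by ring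
    have hfin := Nat.le_of_mul_le_mul_right hc hDpos
    have : n - (ℓ + 1) = n - ℓ - 1 := by omega
    rw [this]
    exact hfin

lemma setMax_le_iff {n : ℕ} (a : Fin n → ℝ) (S : Finset (Fin n)) {x : ℝ} (hx : 0 ≤ x) :
    setMax a S ≤ x ↔ ∀ i ∈ S, a i ≤ x := by
  unfold setMax
  split_ifs with h
  · exact Finset.sup'_le_iff h a
  · simp only [Finset.not_nonempty_iff_eq_empty] at h
    subst h
    simp [hx]

lemma filter_powersetCard_card {n : ℕ} (a : Fin n → ℝ) {x : ℝ} (hx : 0 ≤ x) (s : ℕ) :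
    (((Finset.univ : Finset (Fin n)).powersetCard s).filter
      (fun S => setMax a S ≤ x)).card
    = ((Finset.univ : Finset (Fin n)).filter (fun i => a i ≤ x)).card.choose s := by
  set T := (Finset.univ : Finset (Fin n)).filter (fun i => a i ≤ x) with hT
  have heq : (((Finset.univ : Finset (Fin n)).powersetCard s).filter
      (fun S => setMax a S ≤ x)) = T.powersetCard s := by
    ext S
    simp only [Finset.mem_filter, Finset.mem_powersetCard]
    rw [setMax_le_iff a S hx]
    constructor
    · rintro ⟨⟨-, hcard⟩, hall⟩
      refine ⟨fun i hi => ?_, hcard⟩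
      rw [hT, Finset.mem_filter]
      exact ⟨Finset.mem_univ _, hall i hi⟩
    · rintro ⟨hsub, hcard⟩
      refine ⟨⟨Finset.subset_univ S, hcard⟩, fun i hi => ?_⟩
      have := hsub hi
      rw [hT, Finset.mem_filter] at this
      exact this.2
  rw [heq, Finset.card_powersetCard]

lemma union_card_eq {n s : ℕ} (hs : s ≤ n) :
    ((((Finset.univ : Finset (Fin n)).powersetCard s ∪
      (Finset.univ : Finset (Fin n)).powersetCard (n - s)).card : ℝ)
      * (if s = n - s then 2 else 1))
    = ((n.choose s + n.choose (n - s) : ℕ) : ℝ) := by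
  have hcs : ((Finset.univ : Finset (Fin n)).powersetCard s).card = n.choose s := by
    rw [Finset.card_powersetCard, Finset.card_univ, Fintype.card_fin]
  have hct : ((Finset.univ : Finset (Fin n)).powersetCard (n - s)).card = n.choose (n - s) := by
    rw [Finset.card_powersetCard, Finset.card_univ, Fintype.card_fin]
  by_cases h : s = n - s
  · rw [if_pos h, ← h, Finset.union_self, hcs]
    push_cast
    ring
  · rw [if_neg h]
    have hdisj : Disjoint ((Finset.univ : Finset (Fin n)).powersetCard s)
        ((Finset.univ : Finset (Fin n)).powersetCard (n - s)) := by
      rw [Finset.disjoint_left]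
      intro S h1 h2
      rw [Finset.mem_powersetCard] at h1 h2
      exact h (h1.2 ▸ h2.2)
    rw [Finset.card_union_of_disjoint hdisj, hcs, hct]
    push_cast
    ring

lemma union_filter_card_eq {n s : ℕ} (a : Fin n → ℝ) {x : ℝ} (hx : 0 ≤ x) :
    ((((((Finset.univ : Finset (Fin n)).powersetCard s ∪
      (Finset.univ : Finset (Fin n)).powersetCard (n - s)).filter
        (fun S => setMax a S ≤ x)).card : ℝ)) * (if s = n - s then 2 else 1))
    = ((((Finset.univ : Finset (Fin n)).filter (fun i => a i ≤ x)).card.choose s : ℝ)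
        + ((((Finset.univ : Finset (Fin n)).filter (fun i => a i ≤ x)).card.choose (n - s) : ℝ))) := by
  by_cases h : s = n - s
  · rw [if_pos h]
    conv_lhs => rw [← h, Finset.union_self]
    rw [filter_powersetCard_card a hx]
    rw [← h]
    push_cast
    ring
  · rw [if_neg h, Finset.filter_union]
    have hdisj : Disjoint (((Finset.univ : Finset (Fin n)).powersetCard s).filter
        (fun S => setMax a S ≤ x))
        (((Finset.univ : Finset (Fin n)).powersetCard (n - s)).filter
        (fun S => setMax a S ≤ x)) := by
      apply Finset.disjoint_filter_filter
      rw [Finset.disjoint_left]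
      intro S h1 h2
      rw [Finset.mem_powersetCard] at h1 h2
      exact h (h1.2 ▸ h2.2)
    rw [Finset.card_union_of_disjoint hdisj, filter_powersetCard_card a hx,
      filter_powersetCard_card a hx]
    push_cast
    ring

/-- Eggs-in-one-basket lemma, part 1: for `0 < a_1 ≤ ... ≤ a_n` and
`n/2 ≤ k < ℓ ≤ n`, with `A` uniform on (k or (n-k))-subsets of `[n]` and `A'`
uniform on (ℓ or (n-ℓ))-subsets of `[n]`, `max{a_i : i ∈ A'}` is stochastically
dominated by `max{a_i : i ∈ A}`: for every `x`,
`P(max over A' ≤ x) ≥ P(max over A ≤ x)`. -/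
theorem stmt1 (n k ℓ : ℕ) (hk : n ≤ 2 * k) (hkl : k < ℓ) (hl : ℓ ≤ n)
    (a : Fin n → ℝ) (ha : ∀ i, 0 < a i) (hmono : Monotone a) (x : ℝ) :
    (((((Finset.univ : Finset (Fin n)).powersetCard k ∪
        (Finset.univ : Finset (Fin n)).powersetCard (n - k)).filter
          (fun S => setMax a S ≤ x)).card : ℝ) /
      (((Finset.univ : Finset (Fin n)).powersetCard k ∪
        (Finset.univ : Finset (Fin n)).powersetCard (n - k)).card : ℝ)) ≤
    (((((Finset.univ : Finset (Fin n)).powersetCard ℓ ∪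
        (Finset.univ : Finset (Fin n)).powersetCard (n - ℓ)).filter
          (fun S => setMax a S ≤ x)).card : ℝ) /
      (((Finset.univ : Finset (Fin n)).powersetCard ℓ ∪
        (Finset.univ : Finset (Fin n)).powersetCard (n - ℓ)).card : ℝ)) := by
  have hkn : k ≤ n := le_of_lt (lt_of_lt_of_le hkl hl)
  rcases lt_or_ge x 0 with hx | hx
  · -- no set has setMax ≤ x
    have hempty : ∀ (U : Finset (Finset (Fin n))),
        (U.filter (fun S => setMax a S ≤ x)) = ∅ := by
      intro U
      rw [Finset.filter_eq_empty_iff]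
      intro S _
      unfold setMax
      rcases S.eq_empty_or_nonempty with rfl | hS
      · rw [dif_neg (by simp)]
        push_neg
        linarith
      · rw [dif_pos hS]
        push_neg
        obtain ⟨i, hi⟩ := hS
        exact lt_of_lt_of_le (lt_trans hx (ha i)) (Finset.le_sup' a hi)
    rw [hempty, hempty]
    simp
  · -- main case
    set m := ((Finset.univ : Finset (Fin n)).filter (fun i => a i ≤ x)).card with hm
    have hmn : m ≤ n := by
      calc m ≤ (Finset.univ : Finset (Fin n)).card := Finset.card_filter_le _ _
        _ = n := by rw [Finset.card_univ, Fintype.card_fin]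
    have hchain := key_chain n m k ℓ hmn hk (le_of_lt hkl) hl
    have hDk : (0 : ℝ) < ((n.choose k + n.choose (n - k) : ℕ) : ℝ) := by
      have := Nat.choose_pos hkn
      have : 0 < n.choose k + n.choose (n - k) := by omega
      exact_mod_cast this
    have hDl : (0 : ℝ) < ((n.choose ℓ + n.choose (n - ℓ) : ℕ) : ℝ) := by
      have := Nat.choose_pos hl
      have : 0 < n.choose ℓ + n.choose (n - ℓ) := by omega
      exact_mod_cast this
    have hNk := union_filter_card_eq (s := k) a hx
    have hNl := union_filter_card_eq (s := ℓ) a hx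
    have hDk' := union_card_eq (n := n) (s := k) hkn
    have hDl' := union_card_eq (n := n) (s := ℓ) hl
    rw [← hm] at hNk hNl
    set εk : ℝ := if k = n - k then 2 else 1 with hek
    set εl : ℝ := if ℓ = n - ℓ then 2 else 1 with hel
    have hεk : (0 : ℝ) < εk := by rw [hek]; split_ifs <;> norm_num
    have hεl : (0 : ℝ) < εl := by rw [hel]; split_ifs <;> norm_num
    set Uk := ((Finset.univ : Finset (Fin n)).powersetCard k ∪
        (Finset.univ : Finset (Fin n)).powersetCard (n - k)) with hUkdef
    set Ul := ((Finset.univ : Finset (Fin n)).powersetCard ℓ ∪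
        (Finset.univ : Finset (Fin n)).powersetCard (n - ℓ)) with hUldef
    have hUk : (0 : ℝ) < (Uk.card : ℝ) := by
      have hne : Uk.Nonempty := by
        apply Finset.Nonempty.mono Finset.subset_union_left
        rw [Finset.powersetCard_nonempty, Finset.card_univ, Fintype.card_fin]
        exact hkn
      exact_mod_cast Finset.card_pos.mpr hne
    have hUl : (0 : ℝ) < (Ul.card : ℝ) := by
      have hne : Ul.Nonempty := by
        apply Finset.Nonempty.mono Finset.subset_union_left
        rw [Finset.powersetCard_nonempty, Finset.card_univ, Fintype.card_fin]
        exact hl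
      exact_mod_cast Finset.card_pos.mpr hne
    rw [div_le_div_iff₀ hUk hUl]
    have hcross : (((m.choose k : ℝ)) + (m.choose (n - k) : ℝ)) *
        (((n.choose ℓ : ℝ)) + (n.choose (n - ℓ) : ℝ)) ≤
        (((m.choose ℓ : ℝ)) + (m.choose (n - ℓ) : ℝ)) *
        (((n.choose k : ℝ)) + (n.choose (n - k) : ℝ)) := by
      have hsymk : n.choose (n - k) = n.choose k := Nat.choose_symm hkn
      have hsyml : n.choose (n - ℓ) = n.choose ℓ := Nat.choose_symm hl
      have hnat : (m.choose k + m.choose (n - k)) * (n.choose ℓ + n.choose (n - ℓ)) ≤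
          (m.choose ℓ + m.choose (n - ℓ)) * (n.choose k + n.choose (n - k)) := by
        rw [hsymk, hsyml]
        calc (m.choose k + m.choose (n - k)) * (n.choose ℓ + n.choose ℓ)
            = (m.choose k + m.choose (n - k)) * n.choose ℓ * 2 := by ring
          _ ≤ (m.choose ℓ + m.choose (n - ℓ)) * n.choose k * 2 :=
              Nat.mul_le_mul_right 2 hchain
          _ = (m.choose ℓ + m.choose (n - ℓ)) * (n.choose k + n.choose k) := by ring
      exact_mod_cast hnat
    push_cast at hNk hNl hDk' hDl'
    have hmain : (((Uk.filter (fun S => setMax a S ≤ x)).card : ℝ) * (Ul.card : ℝ))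
        * (εk * εl) ≤
        (((Ul.filter (fun S => setMax a S ≤ x)).card : ℝ) * (Uk.card : ℝ)) * (εk * εl) := by
      calc (((Uk.filter (fun S => setMax a S ≤ x)).card : ℝ) * (Ul.card : ℝ)) * (εk * εl)
          = (((Uk.filter (fun S => setMax a S ≤ x)).card : ℝ) * εk)
            * ((Ul.card : ℝ) * εl) := by ring
        _ = (((m.choose k : ℝ)) + (m.choose (n - k) : ℝ))
            * (((n.choose ℓ : ℝ)) + (n.choose (n - ℓ) : ℝ)) := by rw [hNk, hDl']
        _ ≤ (((m.choose ℓ : ℝ)) + (m.choose (n - ℓ) : ℝ))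
            * (((n.choose k : ℝ)) + (n.choose (n - k) : ℝ)) := hcross
        _ = (((Ul.filter (fun S => setMax a S ≤ x)).card : ℝ) * εl)
            * ((Uk.card : ℝ) * εk) := by rw [hNl, hDk']
        _ = (((Ul.filter (fun S => setMax a S ≤ x)).card : ℝ) * (Uk.card : ℝ)) * (εk * εl) := by
            ring
    exact le_of_mul_le_mul_right hmain (by positivity)
end

section
/- For integers n, i, k with n/2 ≤ k < n and 0 ≤ i < n, one has (1 / (2·C(n,k))) · [C(i,k) + C(i,n-k)] ≤ (1 / (2·C(n,k+1))) · [C(i,k+1) + C(i,n-k-1)], where C denotes the binomial coefficient extended by zero outside the usual range. -/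
/-- Monotonicity of binomial coefficients: if `a ≤ b` and `a + b ≤ i` then
`C(i,a) ≤ C(i,b)`. -/
lemma choose_mono_aux (i a : ℕ) : ∀ b, a ≤ b → a + b ≤ i → Nat.choose i a ≤ Nat.choose i b := by
  intro b
  induction b using Nat.strong_induction_on with
  | _ b ih =>
    intro hab hbi
    rcases eq_or_lt_of_le hab with rfl | hlt
    · exact le_rfl
    · rcases le_or_gt (2 * b) i with h2 | h2
      · have h1 : Nat.choose i a ≤ Nat.choose i (b - 1) :=
          ih (b - 1) (by omega) (by omega) (by omega)
        refine h1.trans ?_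
        have hh : b - 1 < i / 2 := by omega
        have h := Nat.choose_le_succ_of_lt_half_left hh
        have hb1 : b - 1 + 1 = b := by omega
        rwa [hb1] at h
      · have hbi' : b ≤ i := by omega
        rw [← Nat.choose_symm hbi']
        exact ih (i - b) (by omega) (by omega) (by omega)

lemma key_ineq (i k m : ℕ) (hmk : m ≤ k) (hi : i ≤ k + m) :
    Nat.choose i k * (m + 1) + Nat.choose i m * (i - m) ≤
      Nat.choose i k * (i - k) + Nat.choose i m * (k + 1) := by
  rcases lt_or_ge i k with hik | hik
  · -- i < k : C(i,k) = 0
    rw [Nat.choose_eq_zero_of_lt hik]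
    have : i - m ≤ k + 1 := by omega
    simpa using Nat.mul_le_mul_left (Nat.choose i m) this
  · rcases eq_or_lt_of_le hik with heq | hki
    · -- i = k
      subst heq
      rw [Nat.choose_self]
      have h1 : 1 ≤ Nat.choose k m := Nat.choose_pos (by omega)
      have h4 : Nat.choose k m * (k + 1) = Nat.choose k m * (k - m) + Nat.choose k m * (m + 1) := by
        rw [← Nat.mul_add]; congr 1; omega
      rw [Nat.sub_self, h4]
      have : m + 1 ≤ Nat.choose k m * (m + 1) := Nat.le_mul_of_pos_left _ h1
      omega
    · -- k < i ≤ k + m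
      have hmono : Nat.choose i k ≤ Nat.choose i m := by
        rw [← Nat.choose_symm (by omega : k ≤ i)]
        exact choose_mono_aux i (i - k) m (by omega) (by omega)
      have e1 : m + 1 = (i - k) + (k + m + 1 - i) := by omega
      have e2 : k + 1 = (i - m) + (k + m + 1 - i) := by omega
      rw [e1, e2, Nat.mul_add, Nat.mul_add]
      have := Nat.mul_le_mul_right (k + m + 1 - i) hmono
      omega

lemma nat_ineq (n k i : ℕ) (h1 : n ≤ 2 * k) (h2 : k < n) (h3 : i < n) :
    (Nat.choose i k + Nat.choose i (n - k)) * Nat.choose n (k + 1) ≤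
      (Nat.choose i (k + 1) + Nat.choose i (n - k - 1)) * Nat.choose n k := by
  set m := n - k - 1 with hm
  have hnk : n - k = m + 1 := by omega
  have hn : n = k + m + 1 := by omega
  have hmk : m ≤ k := by omega
  have hi : i ≤ k + m := by omega
  rw [hnk]
  have e1 : Nat.choose n (k + 1) * (k + 1) = Nat.choose n k * (m + 1) := by
    have := Nat.choose_succ_right_eq n k
    rwa [hnk] at this
  have e2 : Nat.choose i (m + 1) * (m + 1) = Nat.choose i m * (i - m) :=
    Nat.choose_succ_right_eq i m
  have e3 : Nat.choose i (k + 1) * (k + 1) = Nat.choose i k * (i - k) :=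
    Nat.choose_succ_right_eq i k
  have key := key_ineq i k m hmk hi
  have H : (Nat.choose i k + Nat.choose i (m + 1)) * Nat.choose n (k + 1) * ((k + 1) * (m + 1)) ≤
      (Nat.choose i (k + 1) + Nat.choose i m) * Nat.choose n k * ((k + 1) * (m + 1)) := by
    calc (Nat.choose i k + Nat.choose i (m + 1)) * Nat.choose n (k + 1) * ((k + 1) * (m + 1))
        = Nat.choose i k * (Nat.choose n (k + 1) * (k + 1)) * (m + 1) +
            Nat.choose i (m + 1) * (m + 1) * (Nat.choose n (k + 1) * (k + 1)) := by ring
      _ = Nat.choose i k * (Nat.choose n k * (m + 1)) * (m + 1) +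
            Nat.choose i m * (i - m) * (Nat.choose n k * (m + 1)) := by rw [e1, e2]
      _ = (Nat.choose i k * (m + 1) + Nat.choose i m * (i - m)) *
            (Nat.choose n k * (m + 1)) := by ring
      _ ≤ (Nat.choose i k * (i - k) + Nat.choose i m * (k + 1)) *
            (Nat.choose n k * (m + 1)) := Nat.mul_le_mul_right _ key
      _ = (Nat.choose i (k + 1) + Nat.choose i m) * Nat.choose n k * ((k + 1) * (m + 1)) := by
            rw [← e3]; ring
  exact Nat.le_of_mul_le_mul_right H (by positivity)

/-- For `n/2 ≤ k < n` and `0 ≤ i < n`,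
`(1/(2 C(n,k)))·(C(i,k)+C(i,n-k)) ≤ (1/(2 C(n,k+1)))·(C(i,k+1)+C(i,n-k-1))`. -/
theorem stmt3 (n k i : ℕ) (h1 : n ≤ 2 * k) (h2 : k < n) (h3 : i < n) :
    (1 / (2 * (Nat.choose n k : ℝ))) *
        ((Nat.choose i k : ℝ) + (Nat.choose i (n - k) : ℝ)) ≤
      (1 / (2 * (Nat.choose n (k + 1) : ℝ))) *
        ((Nat.choose i (k + 1) : ℝ) + (Nat.choose i (n - k - 1) : ℝ)) := by
  have hA : (0 : ℝ) < Nat.choose n k := by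
    exact_mod_cast Nat.choose_pos (le_of_lt h2)
  have hB : (0 : ℝ) < Nat.choose n (k + 1) := by
    exact_mod_cast Nat.choose_pos h2
  have hnat := nat_ineq n k i h1 h2 h3
  have hR : ((Nat.choose i k + Nat.choose i (n - k)) * Nat.choose n (k + 1) : ℝ) ≤
      ((Nat.choose i (k + 1) + Nat.choose i (n - k - 1)) * Nat.choose n k : ℝ) := by
    exact_mod_cast hnat
  rw [div_mul_eq_mul_div, div_mul_eq_mul_div, div_le_div_iff₀ (by positivity) (by positivity)]
  push_cast at hR ⊢
  nlinarith [hR]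
end

section
/- Let x > 0 be a real number and let E be an exponential random variable with rate x (so P(E > t) = e^{-xt} for t ≥ 0). Set X = x·1{E ≤ 1}. Then E[exp(-(X - E[X]))] ≤ exp(E[X]/4). Explicitly: exp(-x·e^{-x}) · (2 - e^{-x}) ≤ exp(x(1 - e^{-x})/4) for all x > 0. -/
/-!
With `t = e^{-x} ∈ (0, 1)` the inequality is `2 - t ≤ exp (x (1 + 3t) / 4)`. Bounding `x = -log t`
from below by its `[2/2]` Padé approximant at `t = 1`, and `exp` by its cubic Taylor polynomial, leaves
a rational inequality in `t` whose difference of sides is `(1 - t)²` times a polynomial positive on `[0, 1]`.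
-/

open Real Set

/-- The `[2/2]` Padé approximant of `-log t` at `t = 1`. -/
noncomputable def negLogPade (t : ℝ) : ℝ := 3 * (1 - t ^ 2) / (t ^ 2 + 4 * t + 1)

lemma hasDerivAt_neg_log_sub_negLogPade {t : ℝ} (ht : 0 < t) :
    HasDerivAt (fun s => -log s - negLogPade s)
      (-((1 - t) ^ 4 / (t * (t ^ 2 + 4 * t + 1) ^ 2))) t := by
  have hD : t ^ 2 + 4 * t + 1 ≠ 0 := by positivity
  have hnum : HasDerivAt (fun s : ℝ => 3 * (1 - s ^ 2)) (3 * -(2 * t)) t := by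
    simpa using ((hasDerivAt_pow 2 t).const_sub 1).const_mul 3
  have hden : HasDerivAt (fun s : ℝ => s ^ 2 + 4 * s + 1) (2 * t + 4) t := by
    simpa using ((hasDerivAt_pow 2 t).add ((hasDerivAt_id t).const_mul 4)).add_const 1
  refine ((hasDerivAt_log ht.ne').neg.sub (hnum.div hden hD)).congr_deriv ?_
  field_simp
  ring

lemma negLogPade_le_neg_log {t : ℝ} (ht0 : 0 < t) (ht1 : t ≤ 1) : negLogPade t ≤ -log t := by
  have hanti : AntitoneOn (fun s => -log s - negLogPade s) (Ioc 0 1) := by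
    refine antitoneOn_of_deriv_nonpos (convex_Ioc 0 1) ?_ ?_ ?_
    · exact fun s hs => (hasDerivAt_neg_log_sub_negLogPade hs.1).continuousAt.continuousWithinAt
    · intro s hs
      rw [interior_Ioc] at hs
      exact (hasDerivAt_neg_log_sub_negLogPade hs.1).differentiableAt.differentiableWithinAt
    · intro s hs
      rw [interior_Ioc] at hs
      rw [(hasDerivAt_neg_log_sub_negLogPade hs.1).deriv, neg_nonpos]
      have := hs.1
      positivity
  have hpade_one : negLogPade 1 = 0 := by norm_num [negLogPade]
  have h := hanti ⟨ht0, ht1⟩ ⟨one_pos, le_rfl⟩ ht1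
  simp only [log_one, hpade_one] at h
  linarith

lemma two_sub_le_exp_negLogPade {t : ℝ} (ht0 : 0 ≤ t) (ht1 : t ≤ 1) :
    2 - t ≤ exp (negLogPade t * (1 + 3 * t) / 4) := by
  set z := negLogPade t * (1 + 3 * t) / 4 with hz
  have hz0 : 0 ≤ z := by
    have hpade : 0 ≤ negLogPade t := div_nonneg (by nlinarith) (by positivity)
    exact div_nonneg (mul_nonneg hpade (by linarith)) zero_le_four
  have htaylor : 1 + z + z ^ 2 / 2 + z ^ 3 / 6 ≤ exp z := by
    simpa [Finset.sum_range_succ, Nat.factorial] using sum_le_exp_of_nonneg hz0 4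
  have hresidual : 0 ≤ 39 + 345 * t + 1587 * t ^ 2 + 5685 * t ^ 3 + 10725 * t ^ 4
      + t ^ 5 * (4299 - 1215 * t - 729 * t ^ 2) := by
    have : 0 ≤ 4299 - 1215 * t - 729 * t ^ 2 := by nlinarith
    positivity
  have hdiff : 1 + z + z ^ 2 / 2 + z ^ 3 / 6 - (2 - t) = (1 - t) ^ 2 *
      (39 + 345 * t + 1587 * t ^ 2 + 5685 * t ^ 3 + 10725 * t ^ 4
        + t ^ 5 * (4299 - 1215 * t - 729 * t ^ 2)) / (384 * (t ^ 2 + 4 * t + 1) ^ 3) := by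
    rw [hz, negLogPade]
    field_simp
    ring
  have : 0 ≤ 1 + z + z ^ 2 / 2 + z ^ 3 / 6 - (2 - t) := by rw [hdiff]; positivity
  linarith

/-- For `x > 0`, `exp(-x e^{-x}) (2 - e^{-x}) ≤ exp(x(1-e^{-x})/4)`. -/
theorem stmt4 (x : ℝ) (hx : 0 < x) :
    Real.exp (-(x * Real.exp (-x))) * (2 - Real.exp (-x)) ≤
      Real.exp (x * (1 - Real.exp (-x)) / 4) := by
  set t := exp (-x)
  have ht0 : 0 < t := exp_pos _
  have ht1 : t ≤ 1 := exp_le_one_iff.mpr (by linarith)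
  have hpade : negLogPade t ≤ x := by simpa [t] using negLogPade_le_neg_log ht0 ht1
  have hkey : 2 - t ≤ exp (x * (1 + 3 * t) / 4) := by
    refine (two_sub_le_exp_negLogPade ht0.le ht1).trans (exp_le_exp.mpr ?_)
    gcongr
  calc exp (-(x * t)) * (2 - t) ≤ exp (-(x * t)) * exp (x * (1 + 3 * t) / 4) := by gcongr
    _ = exp (x * (1 - t) / 4) := by rw [← exp_add]; ring_nf
end

section
/- Fix positive real numbers x_1, ..., x_m and let E_1, ..., E_m be independent exponential random variables with E_i having rate x_i. Fix t > 0 and set S = x_1·1{E_1 ≤ t} + ... + x_m·1{E_m ≤ t}. Then P(S < E[S]/2) ≤ exp(-t·E[S]/4). -/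
/-!
Chernoff bound at parameter `-t`: `P(S ≤ ES/2) ≤ exp(t·ES/2) · E[exp(-tS)]`, and by independence
`E[exp(-tS)]` is the product of the mgfs of the `x i · 1{E i ≤ t}`. With `u = x i · t`, that mgf is
`e^{-u}(2 - e^{-u})`, which is at most `exp(-(3/4) u (1 - e^{-u}))`; multiplying out gives
`exp(-(3/4) t·ES)`, and the two exponents combine to `-t·ES/4`. The scalar inequality reduces, for
`s = e^{-u} ∈ (0, 1]`, to `log(2 - s) + (1 + 3s)/4 · log s ≤ 0`, which holds because the left side
vanishes at `s = 1` and is increasing on `(0, 1]`.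
-/

open MeasureTheory ProbabilityTheory Real

lemma sub_inv_le_two_mul_log {r : ℝ} (hr0 : 0 < r) (hr1 : r ≤ 1) : r - r⁻¹ ≤ 2 * log r := by
  have := sinh_le_self_iff.mpr (log_nonpos hr0.le hr1)
  rw [sinh_log hr0] at this
  linarith

lemma two_add_sub_add_mul_log_nonneg {s : ℝ} (hs0 : 0 < s) (hs1 : s ≤ 1) :
    0 ≤ 2 + s - 3 * s ^ 2 + 3 * s * (2 - s) * log s := by
  obtain ⟨r, hr0, rfl⟩ : ∃ r, 0 < r ∧ r ^ 2 = s := ⟨√s, sqrt_pos.mpr hs0, sq_sqrt hs0.le⟩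
  have hr1 : r ≤ 1 := by nlinarith
  have hlog : 3 * r ^ 2 * (2 - r ^ 2) * (r - r⁻¹) ≤ 3 * r ^ 2 * (2 - r ^ 2) * (2 * log r) := by
    gcongr
    · nlinarith
    · exact sub_inv_le_two_mul_log hr0 hr1
  have hpoly : 0 ≤ 3 * r ^ 4 + 6 * r ^ 3 - 3 * r ^ 2 - 4 * r + 2 := by
    nlinarith [sq_nonneg (r - 1 / 2), sq_nonneg (r * (r - 1 / 2)), sq_nonneg (r ^ 2 - 1 / 2)]
  -- with `log s ≥ (s - 1) / √s`, the left side factors as `(1 - r) * (3r⁴ + 6r³ - 3r² - 4r + 2)`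
  have hfactor : 2 + r ^ 2 - 3 * (r ^ 2) ^ 2 + 3 * r ^ 2 * (2 - r ^ 2) * (r - r⁻¹)
      = (1 - r) * (3 * r ^ 4 + 6 * r ^ 3 - 3 * r ^ 2 - 4 * r + 2) := by
    field_simp; ring
  rw [log_pow]; push_cast
  nlinarith [mul_nonneg (sub_nonneg.mpr hr1) hpoly]

lemma log_two_sub_add_mul_log_nonpos {s : ℝ} (hs0 : 0 < s) (hs1 : s ≤ 1) :
    log (2 - s) + (1 + 3 * s) / 4 * log s ≤ 0 := by
  set f : ℝ → ℝ := fun y => log (2 - y) + (1 + 3 * y) / 4 * log y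
  have hderiv : ∀ s ∈ Set.Ioo (0 : ℝ) 1, HasDerivAt f
      (-1 / (2 - s) + (3 * log s / 4 + (1 + 3 * s) / (4 * s))) s := by
    intro s ⟨h0, h1⟩
    have h2 : 2 - s ≠ 0 := by linarith
    refine HasDerivAt.congr_deriv (f := f) ((((hasDerivAt_id s).const_sub 2).log h2).add
      (((hasDerivAt_id s).const_mul 3 |>.const_add 1 |>.div_const 4).mul (hasDerivAt_log h0.ne'))) ?_
    simp only [id]
    field_simp
  have hmono : MonotoneOn f (Set.Ioc 0 1) := by
    refine monotoneOn_of_deriv_nonneg (convex_Ioc 0 1) ?_ ?_ ?_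
    · intro s ⟨h0, h1⟩
      refine ContinuousAt.continuousWithinAt ?_
      have : 2 - s ≠ 0 := by linarith
      fun_prop (disch := positivity)
    · simp only [interior_Ioc]
      exact fun s hs => (hderiv s hs).differentiableAt.differentiableWithinAt
    · simp only [interior_Ioc]
      intro s hs
      rw [(hderiv s hs).deriv]
      obtain ⟨h0, h1⟩ := hs
      have := two_add_sub_add_mul_log_nonneg h0 h1.le
      have h2 : 0 < 2 - s := by linarith
      rw [div_add_div _ _ (by norm_num) (by positivity), div_add_div _ _ h2.ne' (by positivity)]
      apply div_nonneg _ (by positivity)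
      nlinarith
  simpa [f, show (2 : ℝ) - 1 = 1 by norm_num] using hmono ⟨hs0, hs1⟩ ⟨one_pos, le_rfl⟩ hs1

lemma exp_neg_mul_two_sub_exp_neg_le {u : ℝ} (hu : 0 ≤ u) :
    exp (-u) * (2 - exp (-u)) ≤ exp (-(3 / 4) * u * (1 - exp (-u))) := by
  have hs1 : exp (-u) ≤ 1 := exp_le_one_iff.mpr (neg_nonpos.mpr hu)
  have hgap := log_two_sub_add_mul_log_nonpos (exp_pos (-u)) hs1
  rw [log_exp] at hgap
  calc exp (-u) * (2 - exp (-u)) = exp (-u + log (2 - exp (-u))) := by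
        rw [exp_add, exp_log (by linarith)]
    _ ≤ exp (-(3 / 4) * u * (1 - exp (-u))) := exp_le_exp.mpr (by linarith)

section Mgf

variable {Ω : Type*} [MeasurableSpace Ω] {μ : Measure Ω} [IsProbabilityMeasure μ]

lemma mgf_indicator_const {A : Set Ω} (hA : MeasurableSet A) (c t : ℝ) :
    mgf (A.indicator fun _ => c) μ t = μ.real Aᶜ + μ.real A * exp (t * c) := by
  have : (fun ω => exp (t * A.indicator (fun _ => c) ω))
      = fun ω => 1 + A.indicator (fun _ => exp (t * c) - 1) ω := by
    ext ω
    by_cases h : ω ∈ A <;> simp [h]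
  rw [mgf, this, integral_add (integrable_const 1) ((integrable_const _).indicator hA),
    integral_const, integral_indicator_const _ hA, probReal_univ, measureReal_compl hA,
    probReal_univ]
  simp only [smul_eq_mul]
  ring

lemma mgf_indicator_le_of_exponential_tail {E : Ω → ℝ} (hE : Measurable E) {x t : ℝ}
    (hx : 0 ≤ x) (ht : 0 ≤ t) (htail : μ {ω | t < E ω} = ENNReal.ofReal (exp (-x * t))) :
    mgf ({ω | E ω ≤ t}.indicator fun _ => x) μ (-t)
      ≤ exp (-(3 / 4) * t * (x * (1 - exp (-x * t)))) := by
  have hA : MeasurableSet {ω | E ω ≤ t} := measurableSet_le hE measurable_const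
  have hAc : μ.real {ω | E ω ≤ t}ᶜ = exp (-(x * t)) := by
    simp only [Set.compl_ofPred, not_le, measureReal_def, htail, neg_mul]
    exact ENNReal.toReal_ofReal (exp_pos _).le
  have hAreal : μ.real {ω | E ω ≤ t} = 1 - exp (-(x * t)) := by
    rw [← hAc, measureReal_compl hA, probReal_univ, sub_sub_cancel]
  calc mgf ({ω | E ω ≤ t}.indicator fun _ => x) μ (-t)
      = exp (-(x * t)) * (2 - exp (-(x * t))) := by
        rw [mgf_indicator_const hA, hAc, hAreal, neg_mul, mul_comm t]
        ring
    _ ≤ exp (-(3 / 4) * (x * t) * (1 - exp (-(x * t)))) :=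
        exp_neg_mul_two_sub_exp_neg_le (mul_nonneg hx ht)
    _ = exp (-(3 / 4) * t * (x * (1 - exp (-x * t)))) := by ring_nf

end Mgf

/-- For independent exponential random variables `E i` with rates `x i > 0`,
`t > 0` and `S = ∑ i, x i · 1{E i ≤ t}`,
`P(S < E[S]/2) ≤ exp(-t·E[S]/4)`. -/
theorem stmt5
    {Ω : Type*} [MeasurableSpace Ω] (μ : Measure Ω) [IsProbabilityMeasure μ]
    (m : ℕ) (x : Fin m → ℝ) (hx : ∀ i, 0 < x i)
    (E : Fin m → Ω → ℝ) (hmeas : ∀ i, Measurable (E i))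
    (hindep : iIndepFun E μ)
    (hlaw : ∀ i, ∀ s : ℝ, 0 ≤ s →
      μ {ω | s < E i ω} = ENNReal.ofReal (Real.exp (-(x i) * s)))
    (t : ℝ) (ht : 0 < t)
    (S : Ω → ℝ) (hS : ∀ ω, S ω = ∑ i, x i * (if E i ω ≤ t then 1 else 0))
    (ES : ℝ) (hES : ES = ∑ i, x i * (1 - Real.exp (-(x i) * t))) :
    (μ {ω | S ω < ES / 2}).toReal ≤ Real.exp (-(t * ES) / 4) := by
  set X : Fin m → Ω → ℝ := fun i => {ω | E i ω ≤ t}.indicator fun _ => x i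
  have hXmeas : ∀ i, Measurable (X i) := fun i =>
    measurable_const.indicator (measurableSet_le (hmeas i) measurable_const)
  have hXindep : iIndepFun X μ :=
    hindep.comp (fun i => (Set.Iic t).indicator fun _ => x i) fun i =>
      measurable_const.indicator measurableSet_Iic
  have hSX : S = ∑ i, X i := by
    ext ω
    simp [hS, X, Set.indicator_apply]
  have hSmeas : Measurable S := by rw [hSX]; fun_prop
  have hint : Integrable (fun ω => exp (-t * S ω)) μ := by
    refine .of_bound (by fun_prop) 1 (.of_forall fun ω => ?_)
    have : 0 ≤ S ω := by
      rw [hSX, Finset.sum_apply]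
      exact Finset.sum_nonneg fun i _ => Set.indicator_nonneg (fun _ _ => (hx i).le) ω
    rw [norm_of_nonneg (exp_pos _).le, exp_le_one_iff]
    nlinarith
  have hmgf : mgf S μ (-t) ≤ exp (-(3 / 4) * t * ES) := by
    rw [hSX, hXindep.mgf_sum hXmeas, hES, Finset.mul_sum, exp_sum]
    exact Finset.prod_le_prod (fun i _ => mgf_nonneg) fun i _ =>
      mgf_indicator_le_of_exponential_tail (hmeas i) (hx i).le ht.le (hlaw i t ht.le)
  calc (μ {ω | S ω < ES / 2}).toReal ≤ μ.real {ω | S ω ≤ ES / 2} :=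
        measureReal_mono fun ω (h : S ω < ES / 2) => h.le
    _ ≤ exp (t * (ES / 2)) * mgf S μ (-t) := by
        simpa using measure_le_le_exp_mul_mgf (ES / 2) (neg_nonpos.mpr ht.le) hint
    _ ≤ exp (t * (ES / 2)) * exp (-(3 / 4) * t * ES) := by gcongr
    _ = exp (-(t * ES) / 4) := by rw [← exp_add]; ring_nf
end

section
/- Let (d_1, ..., d_m) be positive integers, let s ∈ (0, 1/2], let σ² = (1/n)·Σ_{i=1}^m d_i(d_i - 1) for some positive integer n with Σ d_i ≤ n, and suppose for some r ∈ (0,1) that Σ_{i: d_i s > 2} d_i(d_i - 1) ≥ (1-r)·nσ². Then Σ_{i: d_i s > 2} (d_i - 1)(1 - e^{-d_i s}) ≥ (1 - e^{-2}) · ((2-s)/2) · (1-r) · n^{1/2} · σ. -/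
open scoped Classical

open Finset Real

/-!
Each index with `d i * s > 2` has `d i - 1 ≥ (2 - s)/2 · d i` and `1 - e^{-d i s} ≥ 1 - e^{-2}`,
so the sum is at least `(1 - e^{-2})(2 - s)/2 · ∑ d i` over those indices. Since
`∑ dᵢ(dᵢ - 1) ≤ ∑ dᵢ² ≤ (∑ dᵢ)²`, the hypothesis gives `(1 - r) n σ² ≤ (∑ d i)²`, and
`1 - r ≤ √(1 - r)` turns this into `(1 - r) √n σ ≤ ∑ d i`.
-/

lemma sub_one_mul_one_sub_exp_ge {x s : ℝ} (hx : 0 ≤ x) (hs : s ≤ 2) (hxs : 2 < x * s) :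
    (1 - exp (-2)) * ((2 - s) / 2) * x ≤ (x - 1) * (1 - exp (-(x * s))) := by
  have hfactor : (2 - s) / 2 * x ≤ x - 1 := by linarith
  have hexp : 1 - exp (-2) ≤ 1 - exp (-(x * s)) := by
    have : exp (-(x * s)) ≤ exp (-2) := exp_le_exp.2 (by linarith)
    linarith
  have hexp_nonneg : 0 ≤ 1 - exp (-2) := by
    have : exp (-2) ≤ 1 := exp_le_one_iff.2 (by norm_num)
    linarith
  calc (1 - exp (-2)) * ((2 - s) / 2) * x = (2 - s) / 2 * x * (1 - exp (-2)) := by ring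
    _ ≤ (x - 1) * (1 - exp (-(x * s))) :=
      mul_le_mul hfactor hexp hexp_nonneg (by nlinarith)

lemma sum_mul_sub_one_le_sq_sum {ι : Type*} (t : Finset ι) {x : ι → ℝ}
    (hx : ∀ i ∈ t, 0 ≤ x i) : ∑ i ∈ t, x i * (x i - 1) ≤ (∑ i ∈ t, x i) ^ 2 :=
  calc ∑ i ∈ t, x i * (x i - 1) ≤ ∑ i ∈ t, x i ^ 2 :=
        sum_le_sum fun i hi => by nlinarith [hx i hi]
    _ ≤ (∑ i ∈ t, x i) ^ 2 := sum_sq_le_sq_sum_of_nonneg hx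

lemma mul_le_of_mul_sq_le_sq {t y S : ℝ} (ht0 : 0 ≤ t) (ht1 : t ≤ 1) (hy : 0 ≤ y)
    (hS : 0 ≤ S) (h : t * y ^ 2 ≤ S ^ 2) : t * y ≤ S := by
  refine (pow_le_pow_iff_left₀ (mul_nonneg ht0 hy) hS two_ne_zero).1 ?_
  calc (t * y) ^ 2 = t * t * y ^ 2 := by ring
    _ ≤ 1 * t * y ^ 2 := by gcongr
    _ ≤ S ^ 2 := by linarith

theorem stmt6_general (m n : ℕ) (d : Fin m → ℕ)
    (s : ℝ) (hs : s ≤ 1 / 2)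
    (σ : ℝ) (hσ0 : 0 ≤ σ)
    (r : ℝ) (hr0 : 0 < r) (hr1 : r < 1)
    (hbig : (1 - r) * (n : ℝ) * σ ^ 2 ≤
      ∑ i ∈ Finset.univ.filter (fun i => 2 < (d i : ℝ) * s),
        (d i : ℝ) * ((d i : ℝ) - 1)) :
    (1 - Real.exp (-2)) * ((2 - s) / 2) * (1 - r) * Real.sqrt n * σ ≤
      ∑ i ∈ Finset.univ.filter (fun i => 2 < (d i : ℝ) * s),
        ((d i : ℝ) - 1) * (1 - Real.exp (-((d i : ℝ) * s))) := by
  set F := Finset.univ.filter (fun i => 2 < (d i : ℝ) * s)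
  have hd : ∀ i ∈ F, (0 : ℝ) ≤ d i := fun i _ => Nat.cast_nonneg _
  have hcoeff : 0 ≤ (1 - exp (-2)) * ((2 - s) / 2) := by
    have : exp (-2) ≤ 1 := exp_le_one_iff.2 (by norm_num)
    nlinarith
  have hmass : (1 - r) * (√n * σ) ≤ ∑ i ∈ F, (d i : ℝ) := by
    refine mul_le_of_mul_sq_le_sq (by linarith) (by linarith) (by positivity)
      (sum_nonneg hd) ?_
    rw [mul_pow, sq_sqrt (Nat.cast_nonneg n), ← mul_assoc]
    exact hbig.trans (sum_mul_sub_one_le_sq_sum F hd)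
  calc (1 - exp (-2)) * ((2 - s) / 2) * (1 - r) * √n * σ
      = (1 - exp (-2)) * ((2 - s) / 2) * ((1 - r) * (√n * σ)) := by ring
    _ ≤ (1 - exp (-2)) * ((2 - s) / 2) * ∑ i ∈ F, (d i : ℝ) := by gcongr
    _ = ∑ i ∈ F, (1 - exp (-2)) * ((2 - s) / 2) * d i := mul_sum _ _ _
    _ ≤ _ := sum_le_sum fun i hi =>
      sub_one_mul_one_sub_exp_ge (hd i hi) (by linarith) (mem_filter.1 hi).2

/-- If the large-degree terms (`d i · s > 2`) contribute at least `(1-r) n σ²`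
to `∑ d_i (d_i - 1)`, then
`∑_{i : d_i s > 2} (d_i - 1)(1 - e^{-d_i s}) ≥ (1-e^{-2})·((2-s)/2)·(1-r)·√n·σ`. -/
theorem stmt6 (m n : ℕ) (hn : 0 < n) (d : Fin m → ℕ) (hd : ∀ i, 1 ≤ d i)
    (hsum : ∑ i, d i ≤ n) (s : ℝ) (hs0 : 0 < s) (hs : s ≤ 1 / 2)
    (σ : ℝ) (hσ0 : 0 ≤ σ)
    (hσ : σ ^ 2 = (1 / (n : ℝ)) * ∑ i, (d i : ℝ) * ((d i : ℝ) - 1))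
    (r : ℝ) (hr0 : 0 < r) (hr1 : r < 1)
    (hbig : (1 - r) * (n : ℝ) * σ ^ 2 ≤
      ∑ i ∈ Finset.univ.filter (fun i => 2 < (d i : ℝ) * s),
        (d i : ℝ) * ((d i : ℝ) - 1)) :
    (1 - Real.exp (-2)) * ((2 - s) / 2) * (1 - r) * Real.sqrt n * σ ≤
      ∑ i ∈ Finset.univ.filter (fun i => 2 < (d i : ℝ) * s),
        ((d i : ℝ) - 1) * (1 - Real.exp (-((d i : ℝ) * s))) :=
  stmt6_general m n d s hs σ hσ0 r hr0 hr1 hbig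
end

section
/- Let μ = (μ_k)_{k≥0} be a probability distribution on the nonnegative integers with μ_0 + μ_1 < 1 - ε and μ_0/(μ_0 + μ_1) > ε for some ε ∈ [0,1). Let τ > 0 and define Φ(τ) = Σ_{k≥0} μ_k τ^k and μ̂_1 = μ_1 τ / Φ(τ). Then μ̂_1 < 1 - ε. -/
/-- If `μ` is a probability distribution on `ℕ` with `μ₀ + μ₁ < 1 - ε` and
`μ₀/(μ₀+μ₁) > ε`, and `τ > 0` with `Φ(τ) = ∑ μ_k τ^k < ∞`, then
`μ̂₁ = μ₁ τ / Φ(τ) < 1 - ε`. -/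
theorem stmt8 (μ : ℕ → ℝ) (hμ : ∀ k, 0 ≤ μ k) (hsum : ∑' k, μ k = 1)
    (ε : ℝ) (hε0 : 0 ≤ ε) (hε1 : ε < 1)
    (h01 : μ 0 + μ 1 < 1 - ε) (hratio : ε < μ 0 / (μ 0 + μ 1))
    (τ : ℝ) (hτ : 0 < τ)
    (hΦ : Summable (fun k => μ k * τ ^ k)) :
    μ 1 * τ / (∑' k, μ k * τ ^ k) < 1 - ε := by
  have hμs : Summable μ := by
    by_contra h
    rw [tsum_eq_zero_of_not_summable h] at hsum
    norm_num at hsum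
  set f : ℕ → ℝ := fun k => μ k * τ ^ k with hf
  have hfnn : ∀ k, 0 ≤ f k := fun k => mul_nonneg (hμ k) (pow_nonneg hτ.le k)
  have htail : Summable (fun k => f (k + 1)) := (summable_nat_add_iff 1).2 hΦ
  have hΦsplit : ∑' k, f k = f 0 + ∑' k, f (k + 1) := Summable.tsum_eq_zero_add hΦ
  have hμsplit : μ 0 + ∑' k, μ (k + 1) = 1 := by
    rw [← Summable.tsum_eq_zero_add hμs, hsum]
  have hf0 : f 0 = μ 0 := by simp [hf]
  -- positivity of μ 0 + μ 1 from hratio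
  have hs : 0 < μ 0 + μ 1 := by
    rcases lt_or_eq_of_le (add_nonneg (hμ 0) (hμ 1)) with h | h
    · exact h
    · rw [← h, div_zero] at hratio; linarith
  have hεs : ε * (μ 0 + μ 1) < μ 0 := (lt_div_iff₀ hs).1 hratio
  have hμ0pos : 0 < μ 0 := by nlinarith
  have hmain : μ 1 * τ < (1 - ε) * ∑' k, f k ∧ 0 < ∑' k, f k := by
    rcases le_or_gt 1 τ with h1 | h1
    · -- τ ≥ 1 : Φ ≥ μ0 + (1 - μ0) * τ
      have htail2 : Summable (fun k => μ (k + 1) * τ) :=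
        ((summable_nat_add_iff 1).2 hμs).mul_right τ
      have hle : ∑' k, μ (k + 1) * τ ≤ ∑' k, f (k + 1) := by
        refine Summable.tsum_le_tsum (fun k => ?_) htail2 htail
        have hpow : τ ^ 1 ≤ τ ^ (k + 1) :=
          pow_le_pow_right₀ h1 (Nat.le_add_left 1 k)
        simp only [pow_one] at hpow
        exact mul_le_mul_of_nonneg_left hpow (hμ (k + 1))
      have hval : ∑' k, μ (k + 1) * τ = (1 - μ 0) * τ := by
        rw [tsum_mul_right]
        have : ∑' k, μ (k + 1) = 1 - μ 0 := by linarith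
        rw [this]
      have hB : μ 0 + (1 - μ 0) * τ ≤ ∑' k, f k := by
        rw [hΦsplit, hf0]
        have := hle
        rw [hval] at this
        linarith
      have hμ0 := hμ 0
      have hμ1 := hμ 1
      constructor
      · nlinarith [mul_pos hτ (by linarith : (0:ℝ) < 1 - ε - μ 0 - μ 1),
          mul_nonneg (mul_nonneg hε0 hμ0) hτ.le]
      · nlinarith [mul_pos hτ (by linarith : (0:ℝ) < 1 - μ 0)]
    · -- τ < 1 : Φ ≥ μ0 + μ1 * τ
      have hsplit2 : ∑' k, f (k + 1) = f 1 + ∑' k, f (k + 1 + 1) := by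
        simpa using Summable.tsum_eq_zero_add htail
      have htail3 : (0:ℝ) ≤ ∑' k, f (k + 1 + 1) :=
        tsum_nonneg (fun k => hfnn (k + 1 + 1))
      have hf1 : f 1 = μ 1 * τ := by simp [hf]
      have hB : μ 0 + μ 1 * τ ≤ ∑' k, f k := by
        rw [hΦsplit, hf0, hsplit2, hf1]; linarith
      have hμ1 := hμ 1
      have hμ1τ : 0 ≤ μ 1 * τ := mul_nonneg hμ1 hτ.le
      constructor
      · nlinarith [mul_nonneg (mul_nonneg hε0 hμ1) (by linarith : (0:ℝ) ≤ 1 - τ)]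
      · linarith
  rw [div_lt_iff₀ hmain.2]
  linarith [hmain.1]
end

section
/- Let 0 < a_1 ≤ ... ≤ a_n be reals and n/2 ≤ k < ℓ ≤ n integers. Let B be uniform on the union of k-element and (n-k)-element subsets of [n-1], and B' uniform on the union of ℓ-element and (n-ℓ)-element subsets of [n-1]. Then max{a_i : i ∈ B'} is stochastically dominated by max{a_i : i ∈ B}. -/
open scoped Classical

open Finset

/-- The ground set `[n-1]`, i.e. `Fin n` with its last element removed. -/
def groundSet (n : ℕ) : Finset (Fin n) :=
  Finset.univ.filter (fun i => (i : ℕ) < n - 1)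

/-- binomials increase up to half. -/
lemma egg_half_mono (t : ℕ) : ∀ b a, a ≤ b → 2 * b ≤ t → t.choose a ≤ t.choose b := by
  intro b
  induction b with
  | zero => intro a ha _; obtain rfl : a = 0 := Nat.le_zero.mp ha; exact le_rfl
  | succ b ih =>
    intro a ha h2
    rcases Nat.lt_succ_iff_lt_or_eq.mp (Nat.lt_succ_of_le ha) with h | rfl
    · have step : t.choose b ≤ t.choose (b + 1) := by
        apply Nat.choose_le_succ_of_lt_half_left
        omega
      exact le_trans (ih a (Nat.lt_succ_iff.mp h) (by omega)) step
    · exact le_rfl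

/-- binomial monotonicity: if `a ≤ b` and `a + b ≤ t` then `C(t,a) ≤ C(t,b)`. -/
lemma egg_choose_mono (t a b : ℕ) (hab : a ≤ b) (h : a + b ≤ t) :
    t.choose a ≤ t.choose b := by
  rcases le_or_gt (2 * b) t with hb | hb
  · exact egg_half_mono t b a hab hb
  · have hbt : b ≤ t := by omega
    rw [← Nat.choose_symm hbt]
    exact egg_half_mono t (t - b) a (by omega) (by omega)

/-- One step of the eggs-in-one-basket binomial inequality. -/
lemma egg_step (n t k : ℕ) (ht : t < n) (hk : n ≤ 2 * k) (hkn : k + 1 ≤ n) :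
    (t.choose k + t.choose (n - k)) * n.choose (k + 1) ≤
      (t.choose (k + 1) + t.choose (n - (k + 1))) * n.choose k := by
  set m := n - (k + 1) with hm
  have hm1 : n - k = m + 1 := by omega
  have hmk : m ≤ k := by omega
  rw [hm1]
  apply Nat.le_of_mul_le_mul_right _ (show 0 < (k + 1) * (m + 1) by positivity)
  have h1 : n.choose (k + 1) * (k + 1) = n.choose k * (m + 1) := by
    rw [Nat.choose_succ_right_eq, hm1]
  have h2 : t.choose (k + 1) * (k + 1) = t.choose k * (t - k) :=
    Nat.choose_succ_right_eq t k
  have h4 : t.choose (m + 1) * (m + 1) = t.choose m * (t - m) :=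
    Nat.choose_succ_right_eq t m
  rcases le_or_gt k t with hkt | hkt
  · -- k ≤ t
    obtain ⟨c, hc⟩ : ∃ c, t = k + c := ⟨t - k, by omega⟩
    obtain ⟨d, hd⟩ : ∃ d, t = m + d := ⟨t - m, by omega⟩
    obtain ⟨e, he⟩ : ∃ e, n = t + 1 + e := ⟨n - t - 1, by omega⟩
    have htk : t - k = c := by omega
    have htm : t - m = d := by omega
    have hm1' : m + 1 = c + e + 1 := by omega
    have hk1' : k + 1 = d + e + 1 := by omega
    have hPQ : t.choose k ≤ t.choose m := by
      rw [← Nat.choose_symm hkt]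
      exact egg_choose_mono t (t - k) m (by omega) (by omega)
    rw [htk] at h2
    rw [htm] at h4
    calc (t.choose k + t.choose (m + 1)) * n.choose (k + 1) * ((k + 1) * (m + 1))
        = t.choose k * (n.choose (k + 1) * (k + 1)) * (m + 1) +
            (t.choose (m + 1) * (m + 1)) * (n.choose (k + 1) * (k + 1)) := by ring
      _ = t.choose k * (n.choose k * (m + 1)) * (m + 1) +
            (t.choose m * d) * (n.choose k * (m + 1)) := by rw [h1, h4]
      _ = t.choose k * n.choose k * ((c + e + 1) * (c + e + 1)) +
            t.choose m * n.choose k * (d * (c + e + 1)) := by rw [hm1']; ring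
      _ ≤ t.choose k * n.choose k * (c * (c + e + 1)) +
            t.choose m * n.choose k * ((d + e + 1) * (c + e + 1)) := by
          have hmul : t.choose k * (n.choose k * ((e + 1) * (c + e + 1))) ≤
              t.choose m * (n.choose k * ((e + 1) * (c + e + 1))) :=
            Nat.mul_le_mul_right _ hPQ
          nlinarith [hmul]
      _ = (t.choose k * c) * n.choose k * (m + 1) +
            t.choose m * n.choose k * ((k + 1) * (m + 1)) := by rw [hm1', hk1']; ring
      _ = (t.choose (k + 1) + t.choose m) * n.choose k * ((k + 1) * (m + 1)) := by
          rw [← h2]; ring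
  · -- t < k : the k-terms vanish
    have hz1 : t.choose k = 0 := Nat.choose_eq_zero_of_lt hkt
    have hz2 : t.choose (k + 1) = 0 := Nat.choose_eq_zero_of_lt (by omega)
    rw [hz1, hz2]
    have htm : t - m ≤ k + 1 := by omega
    calc (0 + t.choose (m + 1)) * n.choose (k + 1) * ((k + 1) * (m + 1))
        = (t.choose (m + 1) * (m + 1)) * (n.choose (k + 1) * (k + 1)) := by ring
      _ = (t.choose m * (t - m)) * (n.choose k * (m + 1)) := by rw [h4, h1]
      _ ≤ (t.choose m * (k + 1)) * (n.choose k * (m + 1)) :=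
          Nat.mul_le_mul_right _ (Nat.mul_le_mul_left _ htm)
      _ = (0 + t.choose m) * n.choose k * ((k + 1) * (m + 1)) := by ring

/-- The main binomial inequality. -/
lemma egg_key (n t k : ℕ) (ht : t < n) (hk : n ≤ 2 * k) :
    ∀ ℓ, k ≤ ℓ → ℓ ≤ n →
    (t.choose k + t.choose (n - k)) * n.choose ℓ ≤
      (t.choose ℓ + t.choose (n - ℓ)) * n.choose k := by
  intro ℓ
  induction ℓ with
  | zero =>
    intro hk0 _
    obtain rfl : k = 0 := Nat.le_zero.mp hk0
    exact le_rfl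
  | succ ℓ ih =>
    intro hkl hln
    rcases Nat.lt_succ_iff_lt_or_eq.mp (Nat.lt_succ_of_le hkl) with h | rfl
    · have hkl' : k ≤ ℓ := Nat.lt_succ_iff.mp h
      have H1 := ih hkl' (by omega)
      have H2 := egg_step n t ℓ ht (by omega) hln
      have hC : 0 < n.choose ℓ := Nat.choose_pos (by omega)
      apply Nat.le_of_mul_le_mul_right _ hC
      calc (t.choose k + t.choose (n - k)) * n.choose (ℓ + 1) * n.choose ℓ
          = ((t.choose k + t.choose (n - k)) * n.choose ℓ) * n.choose (ℓ + 1) := by ring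
        _ ≤ ((t.choose ℓ + t.choose (n - ℓ)) * n.choose k) * n.choose (ℓ + 1) :=
            Nat.mul_le_mul_right _ H1
        _ = ((t.choose ℓ + t.choose (n - ℓ)) * n.choose (ℓ + 1)) * n.choose k := by ring
        _ ≤ ((t.choose (ℓ + 1) + t.choose (n - (ℓ + 1))) * n.choose ℓ) * n.choose k :=
            Nat.mul_le_mul_right _ H2
        _ = (t.choose (ℓ + 1) + t.choose (n - (ℓ + 1))) * n.choose k * n.choose ℓ := by ring
    · exact le_rfl

lemma card_groundSet (n : ℕ) : (groundSet n).card = n - 1 := by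
  have himg : (groundSet n).image Fin.val = Finset.range (n - 1) := by
    ext j
    simp only [groundSet, Finset.mem_image, Finset.mem_filter, Finset.mem_univ, true_and,
      Finset.mem_range]
    constructor
    · rintro ⟨i, hi, rfl⟩; exact hi
    · intro hj; exact ⟨⟨j, by omega⟩, hj, rfl⟩
  calc (groundSet n).card = ((groundSet n).image Fin.val).card :=
        (Finset.card_image_of_injective _ Fin.val_injective).symm
    _ = n - 1 := by rw [himg, Finset.card_range]

lemma egg_filter_powersetCard {n : ℕ} (a : Fin n → ℝ) (x : ℝ) (hx : 0 ≤ x)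
    (G : Finset (Fin n)) (j : ℕ) :
    (G.powersetCard j).filter (fun S => setMax a S ≤ x) =
      (G.filter (fun i => a i ≤ x)).powersetCard j := by
  ext S
  simp only [Finset.mem_filter, Finset.mem_powersetCard]
  constructor
  · rintro ⟨⟨hSG, hcard⟩, hmax⟩
    refine ⟨fun i hi => Finset.mem_filter.2 ⟨hSG hi, ?_⟩, hcard⟩
    have hne : S.Nonempty := ⟨i, hi⟩
    have hle : a i ≤ S.sup' hne a := Finset.le_sup' a hi
    rw [setMax, dif_pos hne] at hmax
    linarith
  · rintro ⟨hST, hcard⟩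
    refine ⟨⟨fun i hi => (Finset.mem_filter.1 (hST hi)).1, hcard⟩, ?_⟩
    rw [setMax]
    split_ifs with h
    · exact Finset.sup'_le h a fun i hi => (Finset.mem_filter.1 (hST hi)).2
    · exact hx

/-- Eggs-in-one-basket lemma, part 2: for `0 < a_1 ≤ ... ≤ a_n` and
`n/2 ≤ k < ℓ ≤ n`, with `B` uniform on (k or (n-k))-subsets of `[n-1]` and
`B'` uniform on (ℓ or (n-ℓ))-subsets of `[n-1]`, `max{a_i : i ∈ B'}` is
stochastically dominated by `max{a_i : i ∈ B}`. -/
theorem stmt18 (n k ℓ : ℕ) (hk : n ≤ 2 * k) (hkl : k < ℓ) (hl : ℓ ≤ n)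
    (a : Fin n → ℝ) (ha : ∀ i, 0 < a i) (hmono : Monotone a) (x : ℝ) :
    ((((groundSet n).powersetCard k ∪ (groundSet n).powersetCard (n - k)).filter
          (fun S => setMax a S ≤ x)).card : ℝ) /
      (((groundSet n).powersetCard k ∪
        (groundSet n).powersetCard (n - k)).card : ℝ) ≤
    ((((groundSet n).powersetCard ℓ ∪ (groundSet n).powersetCard (n - ℓ)).filter
          (fun S => setMax a S ≤ x)).card : ℝ) /
      (((groundSet n).powersetCard ℓ ∪
        (groundSet n).powersetCard (n - ℓ)).card : ℝ) := by
  have hk1 : 1 ≤ k := by omega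
  have hn2 : 2 ≤ n := by omega
  set G := groundSet n with hG
  have hGcard : G.card = n - 1 := card_groundSet n
  have hDk : 0 < (G.powersetCard k ∪ G.powersetCard (n - k)).card := by
    refine Finset.card_pos.2 (Finset.Nonempty.mono Finset.subset_union_right ?_)
    exact Finset.powersetCard_nonempty.2 (by omega)
  have hDl : 0 < (G.powersetCard ℓ ∪ G.powersetCard (n - ℓ)).card := by
    refine Finset.card_pos.2 (Finset.Nonempty.mono Finset.subset_union_right ?_)
    exact Finset.powersetCard_nonempty.2 (by omega)
  have hDkR : (0 : ℝ) < ((G.powersetCard k ∪ G.powersetCard (n - k)).card : ℝ) := by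
    exact_mod_cast hDk
  have hDlR : (0 : ℝ) < ((G.powersetCard ℓ ∪ G.powersetCard (n - ℓ)).card : ℝ) := by
    exact_mod_cast hDl
  rcases lt_or_ge x 0 with hx | hx
  · -- x < 0 : both numerators are zero
    have hempty : ∀ U : Finset (Finset (Fin n)),
        U.filter (fun S => setMax a S ≤ x) = ∅ := by
      intro U
      rw [Finset.filter_eq_empty_iff]
      intro S _
      rw [setMax]
      split_ifs with h
      · obtain ⟨i, hi⟩ := h
        exact not_le.2 (lt_of_lt_of_le (lt_trans hx (ha i)) (Finset.le_sup' a hi))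
      · exact not_le.2 hx
    rw [hempty, hempty]
    simp
  · -- x ≥ 0
    set T := G.filter (fun i => a i ≤ x) with hT
    have htle : T.card ≤ n - 1 := by
      rw [← hGcard]
      exact Finset.card_le_card (Finset.filter_subset _ _)
    have htn : T.card < n := by omega
    have hnum : ∀ j j' : ℕ,
        ((G.powersetCard j ∪ G.powersetCard j').filter (fun S => setMax a S ≤ x)) =
          T.powersetCard j ∪ T.powersetCard j' := by
      intro j j'
      rw [Finset.filter_union, egg_filter_powersetCard a x hx G j,
        egg_filter_powersetCard a x hx G j']
    rw [hnum, hnum]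
    have cardU : ∀ (S : Finset (Fin n)) (j j' : ℕ), j ≠ j' →
        (S.powersetCard j ∪ S.powersetCard j').card = S.card.choose j + S.card.choose j' := by
      intro S j j' hjj
      rw [Finset.card_union_of_disjoint, Finset.card_powersetCard, Finset.card_powersetCard]
      exact Finset.disjoint_left.2 fun A hA hA' =>
        hjj (by rw [← (Finset.mem_powersetCard.1 hA).2, (Finset.mem_powersetCard.1 hA').2])
    have hlne : ℓ ≠ n - ℓ := by omega
    have hCid : ∀ j, 1 ≤ j → j ≤ n → (n - 1).choose j + (n - 1).choose (n - j) = n.choose j := by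
      intro j hj1 hjn
      obtain ⟨j', rfl⟩ : ∃ j', j = j' + 1 := ⟨j - 1, by omega⟩
      have h1 : n - (j' + 1) = (n - 1) - j' := by omega
      rw [h1, Nat.choose_symm (by omega : j' ≤ n - 1)]
      obtain ⟨n', rfl⟩ : ∃ n', n = n' + 1 := ⟨n - 1, by omega⟩
      simp only [Nat.add_sub_cancel]
      rw [Nat.choose_succ_succ]
      exact Nat.add_comm _ _
    have hkey := egg_key n T.card k htn hk ℓ (le_of_lt hkl) hl
    have hDlcard : (G.powersetCard ℓ ∪ G.powersetCard (n - ℓ)).card = n.choose ℓ := by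
      rw [cardU G ℓ (n - ℓ) hlne, hGcard]
      exact hCid ℓ (by omega) hl
    have hNl : (T.powersetCard ℓ ∪ T.powersetCard (n - ℓ)).card =
        T.card.choose ℓ + T.card.choose (n - ℓ) := cardU T ℓ (n - ℓ) hlne
    rw [div_le_div_iff₀ hDkR hDlR]
    rcases eq_or_ne (n - k) k with hkk | hkk
    · -- n = 2k
      have hCid2 : 2 * (n - 1).choose k = n.choose k := by
        have h := hCid k hk1 (by omega)
        rw [hkk] at h
        omega
      rw [hkk, Finset.union_self, Finset.union_self]
      rw [Finset.card_powersetCard, Finset.card_powersetCard, hGcard]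
      rw [hDlcard, hNl]
      have hfin : T.card.choose k * n.choose ℓ ≤
          (T.card.choose ℓ + T.card.choose (n - ℓ)) * ((n - 1).choose k) := by
        have h2 : 2 * (T.card.choose k * n.choose ℓ) ≤
            2 * ((T.card.choose ℓ + T.card.choose (n - ℓ)) * (n - 1).choose k) := by
          calc 2 * (T.card.choose k * n.choose ℓ)
              = (T.card.choose k + T.card.choose (n - k)) * n.choose ℓ := by rw [hkk]; ring
            _ ≤ (T.card.choose ℓ + T.card.choose (n - ℓ)) * n.choose k := hkey
            _ = 2 * ((T.card.choose ℓ + T.card.choose (n - ℓ)) * (n - 1).choose k) := by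
                rw [← hCid2]; ring
        omega
      exact_mod_cast hfin
    · -- n ≠ 2k
      have hDkcard : (G.powersetCard k ∪ G.powersetCard (n - k)).card = n.choose k := by
        rw [cardU G k (n - k) (Ne.symm hkk), hGcard]
        exact hCid k hk1 (by omega)
      have hNk : (T.powersetCard k ∪ T.powersetCard (n - k)).card =
          T.card.choose k + T.card.choose (n - k) := cardU T k (n - k) (Ne.symm hkk)
      rw [hDkcard, hNk, hDlcard, hNl]
      exact_mod_cast hkey
end

section
/- Fix nonnegative integers d_1, ..., d_m and s ∈ (0, 1/2], n ≥ Σ d_i, σ² = (1/n)Σ d_i(d_i−1). Then Σ_{i=1}^m (d_i − 1)(1 − e^{−d_i s}) ≥ ((1 − e^{−2})/2) · (2−s)·n·σ²·s / (2 − s + σ·n^{1/2}·s). -/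
open Finset

private lemma exp_bound_small {x : ℝ} (hx0 : 0 ≤ x) (hx2 : x ≤ 2) :
    (1 - Real.exp (-2)) / 2 * x ≤ 1 - Real.exp (-x) := by
  have h := convexOn_exp.2 (Set.mem_univ (0:ℝ)) (Set.mem_univ (-2:ℝ))
    (show (0:ℝ) ≤ 1 - x/2 by linarith) (show (0:ℝ) ≤ x/2 by linarith)
    (by ring)
  simp only [smul_eq_mul, mul_zero, zero_add, Real.exp_zero, mul_one] at h
  have hx : (x/2) * (-2) = -x := by ring
  rw [hx] at h
  nlinarith [h]

set_option maxHeartbeats 1000000 in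
/-- Full lower bound on `E[X_s]` from the proof of Lemma 4.5: for nonnegative
integers `d_1, ..., d_m`, `s ∈ (0, 1/2]`, `n ≥ ∑ d_i`, and
`σ² = (1/n) ∑ d_i (d_i - 1)`,
`∑ (d_i - 1)(1 - e^{-d_i s}) ≥ ((1-e^{-2})/2)·(2-s) n σ² s / (2 - s + σ √n s)`. -/
theorem stmt19 (m n : ℕ) (hn : 0 < n) (d : Fin m → ℕ)
    (hsum : ∑ i, d i ≤ n)
    (s : ℝ) (hs0 : 0 < s) (hs : s ≤ 1 / 2)
    (σ : ℝ) (hσ0 : 0 ≤ σ)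
    (hσ : σ ^ 2 = (1 / (n : ℝ)) * ∑ i, (d i : ℝ) * ((d i : ℝ) - 1)) :
    ((1 - Real.exp (-2)) / 2) * ((2 - s) * (n : ℝ) * σ ^ 2 * s) /
        (2 - s + σ * Real.sqrt n * s) ≤
      ∑ i, ((d i : ℝ) - 1) * (1 - Real.exp (-((d i : ℝ) * s))) := by
  set c : ℝ := (1 - Real.exp (-2)) / 2 with hc
  have hexp2 : Real.exp (-2) < 1 := by
    rw [← Real.exp_zero]; exact Real.exp_lt_exp.2 (by norm_num)
  have hc0 : 0 < c := by rw [hc]; linarith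
  have hn' : (0:ℝ) < n := by exact_mod_cast hn
  have ha0 : 0 ≤ Real.sqrt n := Real.sqrt_nonneg _
  set a : ℝ := Real.sqrt n with hadef
  have ha2 : a ^ 2 = n := Real.sq_sqrt (le_of_lt hn')
  have hE0 : (0:ℝ) < 2 - s + σ * a * s := by
    have : 0 ≤ σ * a * s := by positivity
    linarith
  set E : ℝ := 2 - s + σ * a * s with hE
  have hD : (n:ℝ) * σ ^ 2 = ∑ i, (d i : ℝ) * ((d i : ℝ) - 1) := by
    rw [hσ]; field_simp
  -- pointwise facts
  have hcases : ∀ i, (d i : ℝ) = 0 ∨ (1:ℝ) ≤ d i := by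
    intro i
    rcases Nat.eq_zero_or_pos (d i) with h | h
    · left; exact_mod_cast h
    · right; exact_mod_cast h
  have hterm0 : ∀ i, 0 ≤ ((d i : ℝ) - 1) * (1 - Real.exp (-((d i : ℝ) * s))) := by
    intro i
    rcases hcases i with h | h
    · rw [h]; simp
    · have h1 : Real.exp (-((d i : ℝ) * s)) ≤ 1 := by
        rw [← Real.exp_zero]
        apply Real.exp_le_exp.2
        nlinarith
      nlinarith
  have hdd0 : ∀ i, 0 ≤ (d i : ℝ) * ((d i : ℝ) - 1) := by
    intro i
    rcases hcases i with h | h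
    · rw [h]; simp
    · nlinarith
  set A : Finset (Fin m) := univ.filter (fun i => (d i : ℝ) * s ≤ 2) with hA
  set T : ℝ := (n:ℝ) * σ ^ 2 with hT
  have hT0 : 0 ≤ T := by positivity
  have hsplit : ∑ i ∈ A, (d i : ℝ) * ((d i : ℝ) - 1)
      + ∑ i ∈ univ.filter (fun i => ¬ ((d i : ℝ) * s ≤ 2)), (d i : ℝ) * ((d i : ℝ) - 1)
      = ∑ i, (d i : ℝ) * ((d i : ℝ) - 1) :=
    sum_filter_add_sum_filter_not _ _ _
  set B : Finset (Fin m) := univ.filter (fun i => ¬ ((d i : ℝ) * s ≤ 2)) with hB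
  have hSnn : (0:ℝ) ≤ ∑ i, ((d i : ℝ) - 1) * (1 - Real.exp (-((d i : ℝ) * s))) :=
    sum_nonneg fun i _ => hterm0 i
  by_cases hcase : (2 - s)/E * T ≤ ∑ i ∈ A, (d i : ℝ) * ((d i : ℝ) - 1)
  · -- small-degree case
    have h1 : ∀ i ∈ A, c * s * ((d i : ℝ) * ((d i : ℝ) - 1))
        ≤ ((d i : ℝ) - 1) * (1 - Real.exp (-((d i : ℝ) * s))) := by
      intro i hi
      rw [hA, mem_filter] at hi
      rcases hcases i with h | h
      · rw [h]; simp
      · have hx0 : 0 ≤ (d i : ℝ) * s := by positivity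
        have hkey := exp_bound_small hx0 hi.2
        have : c * ((d i : ℝ) * s) ≤ 1 - Real.exp (-((d i : ℝ) * s)) := hkey
        nlinarith
    calc c * ((2 - s) * (n : ℝ) * σ ^ 2 * s) / E
        = c * s * ((2 - s)/E * T) := by rw [hT]; ring
      _ ≤ c * s * ∑ i ∈ A, (d i : ℝ) * ((d i : ℝ) - 1) := by
          exact mul_le_mul_of_nonneg_left hcase (mul_nonneg hc0.le hs0.le)
      _ = ∑ i ∈ A, c * s * ((d i : ℝ) * ((d i : ℝ) - 1)) := by rw [mul_sum]
      _ ≤ ∑ i ∈ A, ((d i : ℝ) - 1) * (1 - Real.exp (-((d i : ℝ) * s))) :=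
          sum_le_sum h1
      _ ≤ ∑ i, ((d i : ℝ) - 1) * (1 - Real.exp (-((d i : ℝ) * s))) := by
          apply sum_le_sum_of_subset_of_nonneg (subset_univ A)
          intro i _ _; exact hterm0 i
  · -- large-degree case
    push_neg at hcase
    rcases eq_or_lt_of_le hσ0 with hσz | hσpos
    · rw [← hσz]
      simpa using hSnn
    have hBbig : (σ * a * s / E) * T ≤ ∑ i ∈ B, (d i : ℝ) * ((d i : ℝ) - 1) := by
      have h1 : (σ * a * s / E) * T = T - (2 - s)/E * T := by
        field_simp
        rw [hE]; ring
      rw [h1]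
      have h2 := hsplit
      rw [← hD] at h2
      linarith [hcase]
    -- term bound on B
    have h2 : ∀ i ∈ B, c * (2 - s) * (d i : ℝ)
        ≤ ((d i : ℝ) - 1) * (1 - Real.exp (-((d i : ℝ) * s))) := by
      intro i hi
      rw [hB, mem_filter] at hi
      have hds : 2 < (d i : ℝ) * s := by linarith [not_le.mp hi.2]
      have hd1 : (2 - s) / 2 * (d i : ℝ) ≤ (d i : ℝ) - 1 := by nlinarith
      have hexp : 1 - Real.exp (-((d i : ℝ) * s)) ≥ 1 - Real.exp (-2) := by
        have : Real.exp (-((d i : ℝ) * s)) ≤ Real.exp (-2) :=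
          Real.exp_le_exp.2 (by linarith)
        linarith
      have hd0 : (0:ℝ) ≤ d i := Nat.cast_nonneg _
      have hden : (0:ℝ) ≤ (d i : ℝ) - 1 := by nlinarith
      have key : (2 - s)/2 * (d i : ℝ) * (2 * c)
          ≤ ((d i : ℝ) - 1) * (1 - Real.exp (-((d i : ℝ) * s))) :=
        mul_le_mul hd1 (by rw [hc]; linarith) (by rw [hc]; linarith) hden
      calc c * (2 - s) * (d i : ℝ) = (2 - s)/2 * (d i : ℝ) * (2 * c) := by ring
        _ ≤ _ := key
    -- Cauchy-Schwarz style: sum ≥ sqrt of sum of squares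
    set SB : ℝ := ∑ i ∈ B, (d i : ℝ) with hSB
    have hSB0 : 0 ≤ SB := sum_nonneg fun i _ => Nat.cast_nonneg _
    have hsq : ∑ i ∈ B, (d i : ℝ) * ((d i : ℝ) - 1) ≤ SB ^ 2 := by
      have step1 : ∑ i ∈ B, (d i : ℝ) * ((d i : ℝ) - 1)
          ≤ ∑ i ∈ B, (d i : ℝ) * (d i : ℝ) := by
        apply sum_le_sum
        intro i _
        have hd0 : (0:ℝ) ≤ d i := Nat.cast_nonneg _
        nlinarith
      have step2 : ∑ i ∈ B, (d i : ℝ) * (d i : ℝ) ≤ ∑ i ∈ B, (d i : ℝ) * SB := by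
        apply sum_le_sum
        intro i hi
        apply mul_le_mul_of_nonneg_left _ (Nat.cast_nonneg _)
        exact single_le_sum (f := fun j => (d j : ℝ)) (fun j _ => Nat.cast_nonneg _) hi
      rw [← sum_mul] at step2
      nlinarith
    have hsqrt1 : Real.sqrt (∑ i ∈ B, (d i : ℝ) * ((d i : ℝ) - 1)) ≤ SB := by
      calc Real.sqrt (∑ i ∈ B, (d i : ℝ) * ((d i : ℝ) - 1))
          ≤ Real.sqrt (SB ^ 2) := Real.sqrt_le_sqrt hsq
        _ = SB := by rw [Real.sqrt_sq hSB0]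
    have hsqrt2 : T * s / E ≤ Real.sqrt ((σ * a * s / E) * T) := by
      have hX0 : (0:ℝ) ≤ σ * a * s / E * T :=
        mul_nonneg (div_nonneg (mul_nonneg (mul_nonneg hσ0 ha0) hs0.le) hE0.le) hT0
      have hTpos : 0 < T := by rw [hT]; exact mul_pos hn' (pow_pos hσpos 2)
      rw [Real.le_sqrt' (div_pos (mul_pos hTpos hs0) hE0)]
      rw [div_pow, div_mul_eq_mul_div, div_le_div_iff₀ (by positivity) (by positivity)]
      have hEge : σ * a * s ≤ E := by rw [hE]; linarith
      have hfac : 0 ≤ a^3 * σ^3 * s * E := mul_nonneg (mul_nonneg (mul_nonneg (pow_nonneg ha0 3) (pow_nonneg hσ0 3)) hs0.le) hE0.le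
      have key : (σ * a * s) * (a^3 * σ^3 * s * E) ≤ E * (a^3 * σ^3 * s * E) :=
        mul_le_mul_of_nonneg_right hEge hfac
      have hTa : T = a^2 * σ^2 := by rw [hT, ← ha2]
      rw [hTa]
      nlinarith [key]
    have hsqrt3 : Real.sqrt ((σ * a * s / E) * T)
        ≤ Real.sqrt (∑ i ∈ B, (d i : ℝ) * ((d i : ℝ) - 1)) :=
      Real.sqrt_le_sqrt hBbig
    calc c * ((2 - s) * (n : ℝ) * σ ^ 2 * s) / E
        = c * (2 - s) * (T * s / E) := by rw [hT]; ring
      _ ≤ c * (2 - s) * SB := by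
          apply mul_le_mul_of_nonneg_left _ (mul_nonneg hc0.le (by linarith))
          calc T * s / E ≤ Real.sqrt ((σ * a * s / E) * T) := hsqrt2
            _ ≤ Real.sqrt (∑ i ∈ B, (d i : ℝ) * ((d i : ℝ) - 1)) := hsqrt3
            _ ≤ SB := hsqrt1
      _ = ∑ i ∈ B, c * (2 - s) * (d i : ℝ) := by rw [hSB, mul_sum]
      _ ≤ ∑ i ∈ B, ((d i : ℝ) - 1) * (1 - Real.exp (-((d i : ℝ) * s))) :=
          sum_le_sum h2
      _ ≤ ∑ i, ((d i : ℝ) - 1) * (1 - Real.exp (-((d i : ℝ) * s))) := by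
          apply sum_le_sum_of_subset_of_nonneg (subset_univ B)
          intro i _ _; exact hterm0 i
end
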